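/- arXiv:2007.08324 — 4 statements merged into one kernel-verified Lean document; each statement's English description precedes it below -/
import Mathlib

section
/- Let k ≥ 2 and d ≥ 1 be integers. If G is a d-degenerate graph, then G admits an edge-coloring with at most 4d + 2k − 2 colors such that the subgraph spanned by the edges of each color has all vertex degrees congruent to 1 modulo k. -/
/-- The number of edges of `G` incident to `v` that receive color `i` under `c`. -/
def colorDeg {V : Type*} [Fintype V] [DecidableEq V] (G : SimpleGraph V)
    [DecidableRel G.Adj] {m : ℕ} (c : Sym2 V → Fin m) (i : Fin m) (v : V) : ℕ :=
  ((G.incidenceFinset v).filter (fun e => c e = i)).card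

/-- `c` is a χ'_k-coloring: each color class spans a subgraph with all degrees ≡ 1 (mod k). -/
def IsChiPrimeKColoring {V : Type*} [Fintype V] [DecidableEq V] (G : SimpleGraph V)
    [DecidableRel G.Adj] (k : ℕ) {m : ℕ} (c : Sym2 V → Fin m) : Prop :=
  ∀ i : Fin m, ∀ v : V, colorDeg G c i v = 0 ∨ colorDeg G c i v % k = 1

/-- `G` is `d`-degenerate: there is an ordering of the vertices in which every vertex
has at most `d` neighbors among the earlier vertices. -/
def Degenerate {V : Type*} [Fintype V] (G : SimpleGraph V) (d : ℕ) : Prop :=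
  ∃ f : V ≃ Fin (Fintype.card V),
    ∀ v : V, Nat.card {u : V // G.Adj v u ∧ f u < f v} ≤ d

namespace CPK

set_option linter.unusedSectionVars false

lemma exists_avoid {N : ℕ} (s : Finset (Fin N)) (h : s.card < N) : ∃ x, x ∉ s := by
  by_contra hc
  push_neg at hc
  have : s = Finset.univ := Finset.eq_univ_iff_forall.mpr hc
  simp [this] at h

lemma cardB {N t : ℕ} :
    ((Finset.univ : Finset (Fin N)).filter (fun x : Fin N => (x : ℕ) < t)).card ≤ t := by
  classical
  have h1 := Finset.card_le_card_of_injOn (f := fun x : Fin N => (x : ℕ))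
    (s := (Finset.univ : Finset (Fin N)).filter (fun x : Fin N => (x : ℕ) < t))
    (t := Finset.range t) ?_ ?_
  · simpa using h1
  · intro x hx; simp at hx; simpa using hx
  · intro a _ b _ h; exact Fin.val_injective h


lemma cardB_ge {N t : ℕ} (h : t ≤ N) :
    t ≤ ((Finset.univ : Finset (Fin N)).filter (fun x : Fin N => (x : ℕ) < t)).card := by
  classical
  rcases Nat.eq_zero_or_pos t with ht | ht
  · simp [ht]
  have hN : 0 < N := lt_of_lt_of_le ht h
  have h1 := Finset.card_le_card_of_injOn (f := fun j : ℕ => (⟨j % N, Nat.mod_lt _ hN⟩ : Fin N))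
    (s := Finset.range t)
    (t := (Finset.univ : Finset (Fin N)).filter (fun x : Fin N => (x : ℕ) < t)) ?_ ?_
  · simpa using h1
  · intro x hx
    simp at hx ⊢
    rw [Nat.mod_eq_of_lt (by omega)]
    omega
  · intro a ha b hb hab
    simp at ha hb
    simp [Fin.ext_iff, Nat.mod_eq_of_lt (show a < N by omega), Nat.mod_eq_of_lt (show b < N by omega)] at hab
    exact hab


section AssignLemmas

variable {V : Type*} [DecidableEq V]

lemma singles (k d : ℕ) (hk : 2 ≤ k) (hd : 1 ≤ d)
    (F : V → Finset (Fin (4*d+2*k-2))) (P : Finset (Fin (4*d+2*k-2)))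
    (hP : (P.filter (fun x : Fin (4*d+2*k-2) => 2*d ≤ (x : ℕ))).card ≤ d) :
    ∀ U : Finset V, U.card < 2*k → (∀ u ∈ U, (F u).card + 1 ≤ d) →
    ∃ g : V → Fin (4*d+2*k-2),
      (∀ u ∈ U, g u ∉ F u ∧ g u ∉ P) ∧ Set.InjOn g U := by
  intro U
  induction U using Finset.induction_on with
  | empty =>
    intro _ _
    exact ⟨fun _ => ⟨0, by omega⟩, by simp, by simp [Set.InjOn]⟩
  | @insert a s ha ih =>
    intro hcard hF
    obtain ⟨g, hg1, hg2⟩ := ih (by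
        have := Finset.card_insert_of_notMem ha; omega)
      (fun u hu => hF u (Finset.mem_insert_of_mem hu))
    set Pb := P.filter (fun x : Fin (4*d+2*k-2) => 2*d ≤ (x : ℕ)) with hPb
    set Bs := (Finset.univ.filter (fun x : Fin (4*d+2*k-2) => (x : ℕ) < 2*d)) with hBs
    set A := F a ∪ Pb ∪ s.image g ∪ Bs with hA
    have hAcard : A.card < 4*d+2*k-2 := by
      have h1 : (F a).card + 1 ≤ d := hF a (Finset.mem_insert_self a s)
      have h2 : (s.image g).card ≤ s.card := Finset.card_image_le
      have h3 : s.card + 1 < 2*k := by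
        have := Finset.card_insert_of_notMem ha; omega
      have h4 : Bs.card ≤ 2*d := cardB
      calc A.card ≤ (F a ∪ Pb ∪ s.image g).card + Bs.card := Finset.card_union_le _ _
        _ ≤ ((F a ∪ Pb).card + (s.image g).card) + Bs.card := by
            have := Finset.card_union_le (F a ∪ Pb) (s.image g); omega
        _ ≤ (((F a).card + Pb.card) + (s.image g).card) + Bs.card := by
            have := Finset.card_union_le (F a) Pb; omega
        _ < 4*d+2*k-2 := by omega
    obtain ⟨col, hcol⟩ := exists_avoid A hAcard
    simp only [hA, Finset.mem_union, not_or] at hcol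
    obtain ⟨⟨⟨hc1, hc2⟩, hc3⟩, hc4⟩ := hcol
    have hbig : 2*d ≤ (col : ℕ) := by
      simp only [hBs, Finset.mem_filter, Finset.mem_univ, true_and] at hc4; omega
    have hupd : ∀ u ∈ s, Function.update g a col u = g u := by
      intro u hu
      exact Function.update_of_ne (fun h => ha (by rw [← h]; exact hu)) _ _
    refine ⟨Function.update g a col, ?_, ?_⟩
    · intro u hu
      rcases Finset.mem_insert.mp hu with rfl | hu
      · refine ⟨by simpa using hc1, ?_⟩
        simp only [Function.update_self]
        intro hcolP
        exact hc2 (Finset.mem_filter.mpr ⟨hcolP, hbig⟩)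
      · rw [hupd u hu]
        exact hg1 u hu
    · intro x hx y hy hxy
      simp only [Finset.coe_insert, Set.mem_insert_iff, Finset.mem_coe] at hx hy
      rcases hx with rfl | hx <;> rcases hy with rfl | hy
      · rfl
      · exfalso
        rw [Function.update_self, hupd y hy] at hxy
        exact hc3 (Finset.mem_image.mpr ⟨y, hy, hxy.symm⟩)
      · exfalso
        rw [Function.update_self, hupd x hx] at hxy
        exact hc3 (Finset.mem_image.mpr ⟨x, hx, hxy⟩)
      · rw [hupd x hx, hupd y hy] at hxy
        exact hg2 hx hy hxy

lemma popular (k d : ℕ) (hk : 2 ≤ k) (hd : 1 ≤ d)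
    (F : V → Finset (Fin (4*d+2*k-2))) (U : Finset V)
    (hU : 2*k ≤ U.card) (hF : ∀ u ∈ U, (F u).card + 1 ≤ d) :
    ∃ col : Fin (4*d+2*k-2), (col : ℕ) < 2*d ∧
      k + 1 ≤ (U.filter (fun u => col ∉ F u)).card := by
  classical
  by_contra hc
  push_neg at hc
  set Bs := (Finset.univ.filter (fun x : Fin (4*d+2*k-2) => (x : ℕ) < 2*d)) with hBs
  have hBle : Bs.card ≤ 2*d := cardB
  have hBge : 2*d ≤ Bs.card := cardB_ge (by omega)
  -- double counting
  have hswap : ∑ col ∈ Bs, (U.filter (fun u => col ∉ F u)).card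
      = ∑ u ∈ U, (Bs.filter (fun col => col ∉ F u)).card := by
    simp only [Finset.card_filter]
    rw [Finset.sum_comm]
  have hup : ∑ col ∈ Bs, (U.filter (fun u => col ∉ F u)).card ≤ Bs.card * k := by
    apply le_trans (Finset.sum_le_card_nsmul _ _ k ?_)
    · simp [mul_comm]
    · intro col hcol
      simp only [hBs, Finset.mem_filter, Finset.mem_univ, true_and] at hcol
      have := hc col hcol
      omega
  have hlow : ∀ u ∈ U, d + 1 ≤ (Bs.filter (fun col => col ∉ F u)).card := by
    intro u hu
    have h1 : Bs.filter (fun col => col ∉ F u) = Bs \ F u := by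
      ext x; simp [Finset.mem_sdiff, and_comm]
    rw [h1]
    have := Finset.le_card_sdiff (F u) Bs
    have := hF u hu
    omega
  have hlow2 : U.card * (d+1) ≤ ∑ u ∈ U, (Bs.filter (fun col => col ∉ F u)).card := by
    calc U.card * (d+1) = ∑ _u ∈ U, (d+1) := by simp [mul_comm]
      _ ≤ _ := Finset.sum_le_sum hlow
  have : U.card * (d+1) ≤ Bs.card * k := by omega
  have h2 : (2*k) * (d+1) ≤ (2*d) * k := by
    calc (2*k) * (d+1) ≤ U.card * (d+1) := Nat.mul_le_mul_right _ hU
      _ ≤ Bs.card * k := this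
      _ ≤ (2*d) * k := Nat.mul_le_mul_right _ hBle
  nlinarith

lemma assign (k d : ℕ) (hk : 2 ≤ k) (hd : 1 ≤ d)
    (F : V → Finset (Fin (4*d+2*k-2))) :
    ∀ (N : ℕ) (U : Finset V), U.card ≤ N →
      ∀ (P : Finset (Fin (4*d+2*k-2))),
      (P.filter (fun x : Fin (4*d+2*k-2) => 2*d ≤ (x : ℕ))).card ≤ d →
      (∀ u ∈ U, (F u).card + 1 ≤ d) →
    ∃ g : V → Fin (4*d+2*k-2),
      (∀ u ∈ U, g u ∉ F u) ∧
      (∀ col ∈ P, (U.filter (fun u => g u = col)).card % k = 0) ∧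
      (∀ col ∉ P, (U.filter (fun u => g u = col)).card = 0 ∨
        (U.filter (fun u => g u = col)).card % k = 1) := by
  intro N
  induction N with
  | zero =>
    intro U hU P hP hF
    have : U = ∅ := Finset.card_eq_zero.mp (Nat.le_zero.mp hU)
    subst this
    exact ⟨fun _ => ⟨0, by omega⟩, by simp, by simp, by simp⟩
  | succ N ih =>
    intro U hU P hP hF
    by_cases hsmall : U.card < 2*k
    · obtain ⟨g, hg1, hg2⟩ := singles k d hk hd F P hP U hsmall hF
      refine ⟨g, fun u hu => (hg1 u hu).1, ?_, ?_⟩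
      · intro col hcol
        have : U.filter (fun u => g u = col) = ∅ := by
          apply Finset.filter_eq_empty_iff.mpr
          intro u hu h
          exact (hg1 u hu).2 (h ▸ hcol)
        simp [this]
      · intro col _
        have hle : (U.filter (fun u => g u = col)).card ≤ 1 := by
          apply Finset.card_le_one.mpr
          intro a ha b hb
          simp only [Finset.mem_filter] at ha hb
          exact hg2 ha.1 hb.1 (ha.2.trans hb.2.symm)
        rcases Nat.lt_or_ge (U.filter (fun u => g u = col)).card 1 with h | h
        · exact Or.inl (by omega)
        · right
          have h1 : (U.filter (fun u => g u = col)).card = 1 := by omega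
          rw [h1, Nat.mod_eq_of_lt (by omega)]
    · push_neg at hsmall
      obtain ⟨col₀, hcol₀B, hcol₀⟩ := popular k d hk hd F U hsmall hF
      by_cases hcP : col₀ ∈ P
      · -- block of size k
        obtain ⟨W, hWsub, hWcard⟩ := Finset.exists_subset_card_eq
          (s := U.filter (fun u => col₀ ∉ F u)) (n := k) (by omega)
        have hWU : W ⊆ U := hWsub.trans (Finset.filter_subset _ _)
        have hcard' : (U \ W).card ≤ N := by
          have := Finset.card_sdiff_of_subset hWU
          omega
        obtain ⟨g, hg1, hg2, hg3⟩ := ih (U \ W) hcard' P hP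
          (fun u hu => hF u (Finset.mem_sdiff.mp hu).1)
        set g' := fun u => if u ∈ W then col₀ else g u with hg'
        have key : ∀ col, (U.filter (fun u => g' u = col)).card =
            (if col = col₀ then k else 0) + ((U \ W).filter (fun u => g u = col)).card := by
          intro col
          have hU' : U.filter (fun u => g' u = col)
              = (W.filter (fun u => g' u = col)) ∪ ((U \ W).filter (fun u => g' u = col)) := by
            rw [← Finset.filter_union, Finset.union_sdiff_of_subset hWU]
          rw [hU', Finset.card_union_of_disjoint
            (Finset.disjoint_filter_filter (Finset.disjoint_sdiff))]
          congr 1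
          · by_cases hcc : col = col₀
            · subst hcc
              rw [Finset.filter_true_of_mem (fun u hu => by simp [hg', hu]), if_pos rfl, hWcard]
            · rw [if_neg hcc, Finset.card_eq_zero.mpr]
              apply Finset.filter_eq_empty_iff.mpr
              intro u hu
              simp [hg', hu, hcc]
              exact fun h => absurd h.symm hcc
          · refine congrArg Finset.card (Finset.filter_congr ?_)
            intro u hu
            have : u ∉ W := (Finset.mem_sdiff.mp hu).2
            simp [hg', this]
        refine ⟨g', ?_, ?_, ?_⟩
        · intro u hu
          by_cases hw : u ∈ W
          · simp only [hg', if_pos hw]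
            exact (Finset.mem_filter.mp (hWsub hw)).2
          · simp only [hg', if_neg hw]
            exact hg1 u (Finset.mem_sdiff.mpr ⟨hu, hw⟩)
        · intro col hcol
          rw [key col]
          by_cases hcc : col = col₀
          · rw [if_pos hcc, Nat.add_mod, Nat.mod_self, Nat.zero_add, Nat.mod_mod_of_dvd _ (dvd_refl k)]
            exact hg2 col hcol
          · rw [if_neg hcc]
            simpa using hg2 col hcol
        · intro col hcol
          have hcc : col ≠ col₀ := fun h => hcol (h ▸ hcP)
          rw [key col, if_neg hcc]
          simpa using hg3 col hcol
      · -- block of size k+1, extend P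
        obtain ⟨W, hWsub, hWcard⟩ := Finset.exists_subset_card_eq
          (s := U.filter (fun u => col₀ ∉ F u)) (n := k+1) (by omega)
        have hWU : W ⊆ U := hWsub.trans (Finset.filter_subset _ _)
        have hcard' : (U \ W).card ≤ N := by
          have := Finset.card_sdiff_of_subset hWU
          omega
        have hP' : ((insert col₀ P).filter
            (fun x : Fin (4*d+2*k-2) => 2*d ≤ (x : ℕ))).card ≤ d := by
          rw [Finset.filter_insert, if_neg (by omega)]
          exact hP
        obtain ⟨g, hg1, hg2, hg3⟩ := ih (U \ W) hcard' (insert col₀ P) hP'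
          (fun u hu => hF u (Finset.mem_sdiff.mp hu).1)
        set g' := fun u => if u ∈ W then col₀ else g u with hg'
        have key : ∀ col, (U.filter (fun u => g' u = col)).card =
            (if col = col₀ then k+1 else 0) + ((U \ W).filter (fun u => g u = col)).card := by
          intro col
          have hU' : U.filter (fun u => g' u = col)
              = (W.filter (fun u => g' u = col)) ∪ ((U \ W).filter (fun u => g' u = col)) := by
            rw [← Finset.filter_union, Finset.union_sdiff_of_subset hWU]
          rw [hU', Finset.card_union_of_disjoint
            (Finset.disjoint_filter_filter (Finset.disjoint_sdiff))]
          congr 1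
          · by_cases hcc : col = col₀
            · subst hcc
              rw [Finset.filter_true_of_mem (fun u hu => by simp [hg', hu]), if_pos rfl, hWcard]
            · rw [if_neg hcc, Finset.card_eq_zero.mpr]
              apply Finset.filter_eq_empty_iff.mpr
              intro u hu
              simp [hg', hu, hcc]
              exact fun h => absurd h.symm hcc
          · refine congrArg Finset.card (Finset.filter_congr ?_)
            intro u hu
            have : u ∉ W := (Finset.mem_sdiff.mp hu).2
            simp [hg', this]
        refine ⟨g', ?_, ?_, ?_⟩
        · intro u hu
          by_cases hw : u ∈ W
          · simp only [hg', if_pos hw]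
            exact (Finset.mem_filter.mp (hWsub hw)).2
          · simp only [hg', if_neg hw]
            exact hg1 u (Finset.mem_sdiff.mpr ⟨hu, hw⟩)
        · intro col hcol
          have hcc : col ≠ col₀ := fun h => hcP (h ▸ hcol)
          rw [key col, if_neg hcc]
          simpa using hg2 col (Finset.mem_insert_of_mem hcol)
        · intro col hcol
          by_cases hcc : col = col₀
          · rw [key col, if_pos hcc]
            right
            have h0 := hg2 col (hcc ▸ Finset.mem_insert_self col₀ P)
            rw [Nat.add_mod, h0, Nat.add_zero, Nat.mod_mod_of_dvd _ (dvd_refl k),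
              Nat.add_mod_left, Nat.mod_eq_of_lt (by omega)]
          · rw [key col, if_neg hcc]
            simp only [Nat.zero_add]
            exact hg3 col (by simp [Finset.mem_insert, hcc, hcol])


end AssignLemmas

section Main

variable {V : Type*} [Fintype V] [DecidableEq V]

def pcnt (G : SimpleGraph V) [DecidableRel G.Adj] (ord : V → ℕ) {M : ℕ}
    (c : Sym2 V → Fin M) (i : ℕ) (v : V) (col : Fin M) : ℕ :=
  ((G.neighborFinset v).filter (fun u => min (ord u) (ord v) < i ∧ c s(v, u) = col)).card

lemma main (k d : ℕ) (hk : 2 ≤ k) (hd : 1 ≤ d) (G : SimpleGraph V) [DecidableRel G.Adj]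
    (f : V ≃ Fin (Fintype.card V))
    (hf : ∀ v : V, ((G.neighborFinset v).filter (fun u => (f u : ℕ) < (f v : ℕ))).card ≤ d)
    (i : ℕ) :
    ∃ c : Sym2 V → Fin (4*d+2*k-2),
      (∀ v : V, (f v : ℕ) < i → ∀ col,
        pcnt G (fun x => (f x : ℕ)) c i v col = 0 ∨
        pcnt G (fun x => (f x : ℕ)) c i v col % k = 1) ∧
      (∀ v : V, i ≤ (f v : ℕ) → ∀ col,
        pcnt G (fun x => (f x : ℕ)) c i v col ≤ 1) := by
  set ord : V → ℕ := fun x => (f x : ℕ) with hord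
  induction i with
  | zero =>
    refine ⟨fun _ => ⟨0, by omega⟩, fun v hv => by omega, fun v hv col => ?_⟩
    have : pcnt G ord (fun _ => (⟨0, by omega⟩ : Fin (4*d+2*k-2))) 0 v col = 0 := by
      unfold pcnt
      rw [Finset.card_eq_zero]
      apply Finset.filter_eq_empty_iff.mpr
      intro u _
      simp
    omega
  | succ i ih =>
    obtain ⟨c, hA, hB⟩ := ih
    by_cases hi : Fintype.card V ≤ i
    · refine ⟨c, fun v hv col => ?_, fun v hv col => ?_⟩
      · have hvlt : ord v < i := lt_of_lt_of_le (f v).isLt hi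
        have heq : pcnt G ord c (i+1) v col = pcnt G ord c i v col := by
          unfold pcnt
          refine congrArg Finset.card (Finset.filter_congr ?_)
          intro u hu
          have : ord u < i := lt_of_lt_of_le (f u).isLt hi
          constructor
          · rintro ⟨-, h2⟩; exact ⟨by omega, h2⟩
          · rintro ⟨-, h2⟩; exact ⟨by omega, h2⟩
        rw [heq]
        exact hA v hvlt col
      · exact absurd (lt_of_lt_of_le (f v).isLt hi) (by omega)
    · push_neg at hi
      set w : V := f.symm ⟨i, hi⟩ with hwdef
      have hw : ord w = i := by simp [hwdef, hord]
      have hordw : ∀ u : V, u ≠ w → ord u ≠ i := by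
        intro u hu h
        apply hu
        have : f u = ⟨i, hi⟩ := Fin.ext (by simpa [hord] using h)
        rw [← f.symm_apply_apply u, this]
      set U : Finset V := (G.neighborFinset w).filter (fun u => i < ord u) with hU
      set F : V → Finset (Fin (4*d+2*k-2)) := fun u =>
        ((G.neighborFinset u).filter (fun x => min (ord x) (ord u) < i)).image
          (fun x => c s(u, x)) with hF
      set P : Finset (Fin (4*d+2*k-2)) :=
        ((G.neighborFinset w).filter (fun x => ord x < i)).image (fun x => c s(w, x)) with hP
      have hPcard : (P.filter (fun x : Fin (4*d+2*k-2) => 2*d ≤ (x : ℕ))).card ≤ d := by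
        calc (P.filter (fun x : Fin (4*d+2*k-2) => 2*d ≤ (x : ℕ))).card ≤ P.card :=
              Finset.card_filter_le _ _
          _ ≤ ((G.neighborFinset w).filter (fun x => ord x < i)).card := Finset.card_image_le
          _ ≤ d := by rw [← hw]; exact hf w
      have hFcard : ∀ u ∈ U, (F u).card + 1 ≤ d := by
        intro u hu
        rw [hU, Finset.mem_filter, SimpleGraph.mem_neighborFinset] at hu
        obtain ⟨hadj, hiu⟩ := hu
        have hsub : (G.neighborFinset u).filter (fun x => min (ord x) (ord u) < i) ⊆
            ((G.neighborFinset u).filter (fun x => ord x < ord u)).erase w := by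
          intro x hx
          rw [Finset.mem_filter] at hx
          obtain ⟨hx1, hx2⟩ := hx
          have hxlt : ord x < i := by omega
          refine Finset.mem_erase.mpr ⟨?_, Finset.mem_filter.mpr ⟨hx1, by omega⟩⟩
          intro hxw
          rw [hxw, hw] at hxlt
          omega
        have hwmem : w ∈ (G.neighborFinset u).filter (fun x => ord x < ord u) := by
          refine Finset.mem_filter.mpr ⟨?_, by omega⟩
          rw [SimpleGraph.mem_neighborFinset]
          exact hadj.symm
        have h1 : (F u).card ≤
            (((G.neighborFinset u).filter (fun x => ord x < ord u)).erase w).card :=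
          le_trans Finset.card_image_le (Finset.card_le_card hsub)
        rw [Finset.card_erase_of_mem hwmem] at h1
        have h2 : ((G.neighborFinset u).filter (fun x => ord x < ord u)).card ≤ d := hf u
        have h3 : 1 ≤ ((G.neighborFinset u).filter (fun x => ord x < ord u)).card :=
          Finset.card_pos.mpr ⟨w, hwmem⟩
        omega
      obtain ⟨g, hg1, hg2, hg3⟩ := assign k d hk hd F U.card U le_rfl P hPcard hFcard
      -- the new coloring
      set c' : Sym2 V → Fin (4*d+2*k-2) := Sym2.lift ⟨fun a b =>
        if a = w ∧ i < ord b then g b else if b = w ∧ i < ord a then g a else c s(a, b), by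
          intro a b
          dsimp only
          by_cases h1 : a = w ∧ i < ord b <;> by_cases h2 : b = w ∧ i < ord a
          · exfalso
            obtain ⟨rfl, hb⟩ := h1
            obtain ⟨hbw, ha⟩ := h2
            rw [hbw, hw] at hb
            omega
          · simp only [if_pos h1, if_neg h2]
          · simp only [if_neg h1, if_pos h2]
          · simp only [if_neg h1, if_neg h2]
            rw [Sym2.eq_swap]⟩ with hc'
      have heval : ∀ a b : V, c' s(a, b) =
          if a = w ∧ i < ord b then g b else if b = w ∧ i < ord a then g a else c s(a, b) := by
        intro a b
        rw [hc', Sym2.lift_mk]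
      refine ⟨c', ?_, ?_⟩
      · -- (A)
        intro v hv col
        have hov : ord v = (f v : ℕ) := rfl
        rcases Nat.lt_or_ge (ord v) i with hvi | hvi
        · -- old processed vertex, untouched
          have heq : pcnt G ord c' (i+1) v col = pcnt G ord c i v col := by
            unfold pcnt
            refine congrArg Finset.card (Finset.filter_congr ?_)
            intro u hu
            have hcc : c' s(v, u) = c s(v, u) := by
              rw [heval]
              have hn1 : ¬ (v = w ∧ i < ord u) := by
                rintro ⟨h1, -⟩
                rw [h1, hw] at hvi
                omega
              have hn2 : ¬ (u = w ∧ i < ord v) := by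
                rintro ⟨-, h2⟩
                omega
              rw [if_neg hn1, if_neg hn2]
            rw [hcc]
            constructor
            · rintro ⟨-, h2⟩; exact ⟨by omega, h2⟩
            · rintro ⟨-, h2⟩; exact ⟨by omega, h2⟩
          rw [heq]
          exact hA v (by omega) col
        · -- the newly processed vertex: v = w
          have hordv : ord v = i := by omega
          have hvw : v = w := by
            by_contra hne
            exact hordw v hne hordv
          set S := (G.neighborFinset v).filter
            (fun u => min (ord u) (ord v) < i+1 ∧ c' s(v, u) = col) with hSdef
          have hpc : pcnt G ord c' (i+1) v col = S.card := rfl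
          have hS1 : S = (G.neighborFinset v).filter (fun u => c' s(v, u) = col) := by
            refine Finset.filter_congr ?_
            intro u hu
            have hm : min (ord u) (ord v) < i + 1 := by omega
            simp [hm]
          set T := (G.neighborFinset v).filter
            (fun u => min (ord u) (ord v) < i ∧ c s(v, u) = col) with hTdef
          have hpcold : pcnt G ord c i v col = T.card := rfl
          have hsplitcard :
              ((S.filter (fun u => i < ord u)).card + (S.filter (fun u => ¬ i < ord u)).card)
                = S.card := Finset.card_filter_add_card_filter_not _
          have hhi : S.filter (fun u => i < ord u) = U.filter (fun u => g u = col) := by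
            rw [hS1, hU, ← hvw, Finset.filter_filter, Finset.filter_filter]
            refine Finset.filter_congr ?_
            intro u hu
            constructor
            · rintro ⟨hcu, hlt⟩
              refine ⟨hlt, ?_⟩
              rw [heval, if_pos ⟨hvw, hlt⟩] at hcu
              exact hcu
            · rintro ⟨hlt, hg⟩
              refine ⟨?_, hlt⟩
              rw [heval, if_pos ⟨hvw, hlt⟩]
              exact hg
          have hlo : S.filter (fun u => ¬ i < ord u) = T := by
            rw [hS1, hTdef, Finset.filter_filter]
            refine Finset.filter_congr ?_
            intro u hu
            have hadj : G.Adj v u := by rwa [SimpleGraph.mem_neighborFinset] at hu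
            have hune : u ≠ w := by
              rw [← hvw]
              exact fun h => (G.ne_of_adj hadj) h.symm
            have hordu : ord u ≠ i := hordw u hune
            have hcceq : ∀ _ : ord u < i, c' s(v, u) = c s(v, u) := by
              intro huli
              rw [heval]
              have hn1 : ¬ (v = w ∧ i < ord u) := by
                rintro ⟨-, h2⟩
                omega
              have hn2 : ¬ (u = w ∧ i < ord v) := fun h => hune h.1
              rw [if_neg hn1, if_neg hn2]
            constructor
            · rintro ⟨hcu, hle⟩
              have huli : ord u < i := by omega
              exact ⟨by omega, by rw [← hcceq huli]; exact hcu⟩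
            · rintro ⟨hmin, hcu⟩
              have huli : ord u < i := by omega
              exact ⟨by rw [hcceq huli]; exact hcu, by omega⟩
          have hBv : T.card ≤ 1 := by
            rw [← hpcold]
            exact hB v (by omega) col
          have hPiff : col ∈ P ↔ T.Nonempty := by
            rw [hP, hTdef]
            constructor
            · intro hcol
              obtain ⟨x, hx, hcx⟩ := Finset.mem_image.mp hcol
              rw [Finset.mem_filter] at hx
              have hxr : ord x < i := hx.2
              refine ⟨x, Finset.mem_filter.mpr ⟨?_, ?_, ?_⟩⟩
              · rw [hvw]; exact hx.1
              · omega
              · rw [hvw]; exact hcx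
            · rintro ⟨x, hx⟩
              rw [Finset.mem_filter] at hx
              have hxadj := hx.1
              have hxr : min (ord x) (ord v) < i := hx.2.1
              refine Finset.mem_image.mpr ⟨x, Finset.mem_filter.mpr ⟨?_, ?_⟩, ?_⟩
              · rw [← hvw]; exact hxadj
              · omega
              · rw [← hvw]; exact hx.2.2
          rw [hpc, ← hsplitcard, hhi, hlo]
          by_cases hcolP : col ∈ P
          · have hT1 : T.card = 1 := by
              have := Finset.card_pos.mpr (hPiff.mp hcolP)
              omega
            right
            rw [hT1, Nat.add_mod, hg2 col hcolP, Nat.zero_add,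
              Nat.mod_mod_of_dvd _ (dvd_refl k), Nat.mod_eq_of_lt (by omega)]
          · have hT0 : T.card = 0 := by
              rcases Finset.eq_empty_or_nonempty T with h | h
              · rw [h]; simp
              · exact absurd (hPiff.mpr h) hcolP
            rw [hT0, Nat.add_zero]
            exact hg3 col hcolP
      · -- (B)
        intro v hv col
        have hov : ord v = (f v : ℕ) := rfl
        have hvgt : i < ord v := by omega
        set S := (G.neighborFinset v).filter
          (fun u => min (ord u) (ord v) < i+1 ∧ c' s(v, u) = col) with hSdef
        have hpc : pcnt G ord c' (i+1) v col = S.card := rfl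
        set T := (G.neighborFinset v).filter
          (fun u => min (ord u) (ord v) < i ∧ c s(v, u) = col) with hTdef
        have hTcard : T.card ≤ 1 := hB v (by omega) col
        have hvnw : v ≠ w := by
          intro h
          rw [h, hw] at hvgt
          omega
        have hmemT : ∀ u ∈ S, u ≠ w → u ∈ T := by
          intro u huS hunw
          rw [hSdef, Finset.mem_filter] at huS
          obtain ⟨hnb, hmin, hcu⟩ := huS
          have hordu : ord u ≠ i := hordw u hunw
          have huli : ord u < i := by omega
          have hcc : c' s(v, u) = c s(v, u) := by
            rw [heval]
            have hn1 : ¬ (v = w ∧ i < ord u) := by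
              rintro ⟨-, h2⟩
              omega
            have hn2 : ¬ (u = w ∧ i < ord v) := fun h => hunw h.1
            rw [if_neg hn1, if_neg hn2]
          rw [hTdef, Finset.mem_filter]
          exact ⟨hnb, by omega, by rw [← hcc]; exact hcu⟩
        rw [hpc]
        by_cases hwS : w ∈ S
        · -- then g v = col and T is empty
          have hgv : g v = col := by
            rw [hSdef, Finset.mem_filter] at hwS
            obtain ⟨hnb, -, hcw⟩ := hwS
            rw [heval] at hcw
            have hn1 : ¬ (v = w ∧ i < ord w) := fun h => hvnw h.1
            rw [if_neg hn1, if_pos ⟨rfl, hvgt⟩] at hcw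
            exact hcw
          have hadjwv : w ∈ G.neighborFinset v := by
            rw [hSdef, Finset.mem_filter] at hwS
            exact hwS.1
          have hadj : G.Adj v w := by rwa [SimpleGraph.mem_neighborFinset] at hadjwv
          have hvU : v ∈ U := by
            rw [hU, Finset.mem_filter, SimpleGraph.mem_neighborFinset]
            exact ⟨hadj.symm, hvgt⟩
          have hTempty : T = ∅ := by
            rw [Finset.eq_empty_iff_forall_notMem]
            intro x hx
            apply hg1 v hvU
            rw [hF]
            rw [hTdef, Finset.mem_filter] at hx
            refine Finset.mem_image.mpr ⟨x, Finset.mem_filter.mpr ⟨hx.1, hx.2.1⟩, ?_⟩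
            rw [hx.2.2, hgv]
          apply Finset.card_le_one.mpr
          intro a ha b hb
          have hida : a = w := by
            by_contra hna
            have := hmemT a ha hna
            rw [hTempty] at this
            simp at this
          have hidb : b = w := by
            by_contra hnb
            have := hmemT b hb hnb
            rw [hTempty] at this
            simp at this
          rw [hida, hidb]
        · apply Finset.card_le_one.mpr
          intro a ha b hb
          have haT : a ∈ T := hmemT a ha (fun h => hwS (h ▸ ha))
          have hbT : b ∈ T := hmemT b hb (fun h => hwS (h ▸ hb))
          exact Finset.card_le_one.mp hTcard a haT b hbT

lemma colorDeg_eq {V : Type*} [Fintype V] [DecidableEq V] (G : SimpleGraph V)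
    [DecidableRel G.Adj] {M : ℕ} (c : Sym2 V → Fin M) (col : Fin M) (v : V) :
    colorDeg G c col v = ((G.neighborFinset v).filter (fun u => c s(v, u) = col)).card := by
  unfold colorDeg
  rw [eq_comm]
  apply Finset.card_bij (fun u _ => s(v, u))
  · intro a ha
    rw [Finset.mem_filter] at ha
    obtain ⟨hnb, hc⟩ := ha
    rw [SimpleGraph.mem_neighborFinset] at hnb
    rw [Finset.mem_filter, SimpleGraph.mem_incidenceFinset]
    exact ⟨⟨(SimpleGraph.mem_edgeSet G).mpr hnb, Sym2.mem_mk_left v a⟩, hc⟩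
  · intro a _ b _ hab
    exact Sym2.congr_right.mp hab
  · intro e he
    rw [Finset.mem_filter, SimpleGraph.mem_incidenceFinset] at he
    obtain ⟨⟨hedge, hve⟩, hc⟩ := he
    have hspec := Sym2.other_spec' hve
    refine ⟨Sym2.Mem.other' hve, ?_, hspec⟩
    rw [Finset.mem_filter, SimpleGraph.mem_neighborFinset]
    constructor
    · rw [← SimpleGraph.mem_edgeSet, hspec]
      exact hedge
    · rw [hspec]
      exact hc


end Main

end CPK

theorem chi_prime_k_of_degenerate (k d : ℕ) (hk : 2 ≤ k) (hd : 1 ≤ d)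
    {V : Type*} [Fintype V] [DecidableEq V] (G : SimpleGraph V) [DecidableRel G.Adj]
    (hG : Degenerate G d) :
    ∃ c : Sym2 V → Fin (4 * d + 2 * k - 2), IsChiPrimeKColoring G k c := by
  obtain ⟨f, hdeg⟩ := hG
  have hf : ∀ v : V,
      ((G.neighborFinset v).filter (fun u => (f u : ℕ) < (f v : ℕ))).card ≤ d := by
    intro v
    have h1 : Nat.card {u : V // G.Adj v u ∧ f u < f v}
        = ((G.neighborFinset v).filter (fun u => (f u : ℕ) < (f v : ℕ))).card := by
      rw [Nat.card_eq_fintype_card, Fintype.card_subtype]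
      congr 1
      ext u
      simp only [Finset.mem_filter, Finset.mem_univ, true_and,
        SimpleGraph.mem_neighborFinset, Fin.lt_def]
    rw [← h1]
    exact hdeg v
  obtain ⟨c, hA, -⟩ := CPK.main k d hk hd G f hf (Fintype.card V)
  refine ⟨c, ?_⟩
  intro col v
  have hv : (f v : ℕ) < Fintype.card V := (f v).isLt
  have h2 : colorDeg G c col v = CPK.pcnt G (fun x => (f x : ℕ)) c (Fintype.card V) v col := by
    rw [CPK.colorDeg_eq]
    unfold CPK.pcnt
    refine congrArg Finset.card (Finset.filter_congr ?_)
    intro u hu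
    have h3 : min ((f u : ℕ)) ((f v : ℕ)) < Fintype.card V := by
      have := (f u).isLt
      omega
    simp [h3]
  rw [h2]
  exact hA v hv col
end

section
/- Let k ≥ 2 and let G be the graph obtained from the complete bipartite graph K_{k,k} by adding a new vertex adjacent to all 2k vertices. Then χ'_k(G) = k + 2. -/
/-- The graph obtained from `K_{k,k}` (parts the two copies of `Fin k`) by adding a
universal vertex `none`. -/
def kkPlusUniversal (k : ℕ) : SimpleGraph (Option (Fin k ⊕ Fin k)) :=
  SimpleGraph.fromRel (fun a b =>
    a = none ∨ (∃ i j : Fin k, a = some (Sum.inl i) ∧ b = some (Sum.inr j)))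

instance (k : ℕ) : DecidableRel (kkPlusUniversal k).Adj :=
  fun a b => decidable_of_iff
    (a ≠ b ∧ ((a = none ∨ (∃ i j : Fin k, a = some (Sum.inl i) ∧ b = some (Sum.inr j))) ∨
      (b = none ∨ (∃ i j : Fin k, b = some (Sum.inl i) ∧ a = some (Sum.inr j))))) Iff.rfl

/-!
At a vertex of degree `k + 1` or `2k`, a colour class of a χ'_k-colouring has degree `0`, `1` or
`k + 1`. Write `u` for the universal vertex `none` and `l_i`, `r_j` for `some (inl i)`,
`some (inr j)`.

Upper bound: colour `l_i r_j` by `σ (j - i)` for a permutation `σ` of `ℤ/k` such that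
`d ↦ σ d - d` is injective on `d ≠ 0`, give `u` a star of colour `σ 0` to the left side and to
`r_{σ 0}`, and colour `u r_j` by `j`. The edges where this clashes, the diagonal `i = j` and the
edges with `σ (j - i) = j`, form two matchings, which take the two extra colours.

Lower bound: with at most `k + 1` colours, a vertex `v ≠ u` is monochromatic or sees every colour
exactly once. Not every `v` sees every colour once: some colour has degree `1` at `u`, and its
degree sum would be odd. A colour `τ` monochromatic at `v` has degree `1` at `u`, so `v` is the
only `τ`-monochromatic vertex; then the other vertices on the side of `v` miss `τ`, so they are
monochromatic too, each in its own colour. Hence all edges from `u` to the opposite side share one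
colour, which has degree `k` at `u`.
-/

open Finset SimpleGraph

section ColorClass

variable {V : Type*} (G : SimpleGraph V) {m : ℕ} (c : Sym2 V → Fin m)

def colorClass (t : Fin m) : SimpleGraph V where
  Adj v w := G.Adj v w ∧ c s(v, w) = t
  symm := ⟨fun _ _ h => ⟨h.1.symm, Sym2.eq_swap ▸ h.2⟩⟩
  loopless := ⟨fun v h => G.loopless.irrefl v h.1⟩

def IsMonochromaticAt (t : Fin m) (v : V) : Prop :=
  ∀ w, G.Adj v w → c s(v, w) = t

variable {G c} in
@[simp] lemma colorClass_adj {t : Fin m} {v w : V} :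
    (colorClass G c t).Adj v w ↔ G.Adj v w ∧ c s(v, w) = t := Iff.rfl

variable {G c} in
lemma IsMonochromaticAt.color_eq_of_adj {t : Fin m} {v w : V} (h : IsMonochromaticAt G c t v)
    (hw : G.Adj w v) : c s(w, v) = t :=
  Sym2.eq_swap (a := w) ▸ h w hw.symm

instance [DecidableRel G.Adj] (t : Fin m) : DecidableRel (colorClass G c t).Adj :=
  fun _ _ => inferInstanceAs (Decidable (_ ∧ _))

variable {G c} [Fintype V] [DecidableEq V] [DecidableRel G.Adj]

lemma colorDeg_eq_degree_colorClass (t : Fin m) (v : V) :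
    colorDeg G c t v = (colorClass G c t).degree v := by
  rw [colorDeg, ← card_incidenceFinset_eq_degree]
  congr 1
  ext e
  induction e using Sym2.ind
  simp only [mem_filter, mem_incidenceFinset, incidenceSet, Set.mem_ofPred_eq, mem_edgeSet,
    colorClass_adj]
  tauto

lemma sum_colorDeg (v : V) : ∑ t, colorDeg G c t v = G.degree v := by
  rw [← G.card_incidenceFinset_eq_degree]
  exact (card_eq_sum_card_fiberwise fun e _ => mem_univ (c e)).symm

lemma even_sum_colorDeg (t : Fin m) : Even (∑ v, colorDeg G c t v) := by
  simp only [colorDeg_eq_degree_colorClass, sum_degrees_eq_twice_card_edges, even_two_mul]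

lemma colorDeg_le_degree (t : Fin m) (v : V) : colorDeg G c t v ≤ G.degree v := by
  rw [← sum_colorDeg (c := c) v]
  exact single_le_sum (f := fun t => colorDeg G c t v) (fun _ _ => Nat.zero_le _) (mem_univ t)

lemma colorDeg_eq_degree_iff {t : Fin m} {v : V} :
    colorDeg G c t v = G.degree v ↔ IsMonochromaticAt G c t v := by
  have hsub : (colorClass G c t).neighborFinset v ⊆ G.neighborFinset v := fun w hw => by
    simp only [mem_neighborFinset] at hw ⊢
    exact hw.1
  rw [colorDeg_eq_degree_colorClass, ← card_neighborFinset_eq_degree,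
    ← card_neighborFinset_eq_degree]
  constructor
  · intro h w hw
    rw [← mem_neighborFinset, ← eq_of_subset_of_card_le hsub h.ge] at hw
    exact ((mem_neighborFinset _ _ _).mp hw).2
  · intro h
    refine congrArg card (Subset.antisymm hsub fun w hw => ?_)
    rw [mem_neighborFinset] at hw ⊢
    exact ⟨hw, h w hw⟩

lemma colorDeg_pos_iff {t : Fin m} {v : V} :
    0 < colorDeg G c t v ↔ ∃ w, G.Adj v w ∧ c s(v, w) = t := by
  simp [colorDeg_eq_degree_colorClass, degree_pos_iff_exists_adj]

lemma two_le_colorDeg {t : Fin m} {v w w' : V} (hne : w ≠ w') (hw : G.Adj v w) (hw' : G.Adj v w')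
    (hcw : c s(v, w) = t) (hcw' : c s(v, w') = t) : 2 ≤ colorDeg G c t v := by
  rw [colorDeg_eq_degree_colorClass, ← card_neighborFinset_eq_degree]
  exact one_lt_card.mpr ⟨w, by simp [hw, hcw], w', by simp [hw', hcw'], hne⟩

lemma colorDeg_le_one {t : Fin m} {v : V}
    (h : ∀ w w', G.Adj v w → G.Adj v w' → c s(v, w) = t → c s(v, w') = t → w = w') :
    colorDeg G c t v ≤ 1 := by
  rw [colorDeg_eq_degree_colorClass, ← card_neighborFinset_eq_degree, card_le_one]
  simp only [mem_neighborFinset]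
  exact fun w hw w' hw' => h w w' hw.1 hw'.1 hw.2 hw'.2

lemma colorDeg_le_one_of_injOn {v : V} (h : Set.InjOn (fun w => c s(v, w)) (G.neighborSet v))
    (t : Fin m) : colorDeg G c t v ≤ 1 :=
  colorDeg_le_one fun _ _ hw hw' hcw hcw' => h hw hw' (hcw.trans hcw'.symm)

end ColorClass

lemma Bool.eq_of_ne_of_ne {a b c : Bool} (ha : a ≠ c) (hb : b ≠ c) : a = b := by
  revert a b c; decide

lemma Nat.eq_one_or_eq_add_one_of_mod_eq_one {k x : ℕ} (hx : x ≤ 2 * k) (h : x % k = 1) :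
    x = 1 ∨ x = k + 1 := by
  have hdiv := Nat.div_add_mod x k
  have : x / k < 2 := by
    by_contra! h2
    have := Nat.mul_le_mul_left k h2
    omega
  interval_cases x / k <;> omega

namespace Fin

@[simp] lemma castAdd_ne_natAdd {m n : ℕ} (a : Fin m) (b : Fin n) :
    Fin.castAdd n a ≠ Fin.natAdd m b := by
  simp [Fin.ext_iff]; omega

@[simp] lemma natAdd_ne_castAdd {m n : ℕ} (a : Fin m) (b : Fin n) :
    Fin.natAdd m b ≠ Fin.castAdd n a :=
  (castAdd_ne_natAdd a b).symm

end Fin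

/-- Complete mappings, for which `d ↦ σ d - d` is injective everywhere, exist in `ℤ/k` only for
odd `k`; this relaxation exists for every `k`. -/
def IsNearOrthomorphism {A : Type*} [AddGroup A] (σ : Equiv.Perm A) : Prop :=
  Set.InjOn (fun d => σ d - d) {0}ᶜ

namespace Fin

variable {k : ℕ} [NeZero k]

lemma exists_isNearOrthomorphism_of_odd (hk : Odd k) :
    ∃ σ : Equiv.Perm (Fin k), IsNearOrthomorphism σ := by
  obtain ⟨p, hp⟩ := hk
  have hinj : Function.Injective fun d : Fin k => d + d := by
    intro a b h
    rw [Fin.ext_iff] at h ⊢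
    simp only [Fin.val_add_eq_ite] at h
    split_ifs at h <;> omega
  refine ⟨Equiv.ofBijective _ (Finite.injective_iff_bijective.mp hinj), fun a _ b _ h => ?_⟩
  simpa using h

/-- `σ` doubles the lower half onto the even residues and sends `d` to `2d + 1` on the upper half,
onto the odd residues. Then `σ d - d` is `d`, resp. `d + 1`, which repeats only the value `0`, at
`d = 0` and `d = k - 1`. -/
lemma exists_isNearOrthomorphism_of_even (hk : Even k) :
    ∃ σ : Equiv.Perm (Fin k), IsNearOrthomorphism σ := by
  obtain ⟨p, hp⟩ := hk
  have hk2 : 2 ≤ k := by have := NeZero.ne k; omega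
  have hone : (1 : Fin k).val = 1 := by rw [Fin.val_one', Nat.mod_eq_of_lt hk2]
  let e : Fin k → Fin k := fun d => if 2 * d.val < k then d else d + 1
  have hinj : Function.Injective fun d => d + e d := by
    intro a b h
    simp only [e] at h
    rw [Fin.ext_iff] at h ⊢
    split_ifs at h <;> simp only [Fin.val_add_eq_ite, hone] at h <;> split_ifs at h <;> omega
  refine ⟨Equiv.ofBijective _ (Finite.injective_iff_bijective.mp hinj), fun a ha b hb h => ?_⟩
  simp only [Equiv.ofBijective_apply, add_sub_cancel_left, e] at h
  simp only [Set.mem_compl_iff, Set.mem_singleton_iff, Fin.ext_iff, Fin.val_zero] at ha hb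
  rw [Fin.ext_iff] at h ⊢
  split_ifs at h <;> (try simp only [Fin.val_add_eq_ite, hone] at h) <;> (try split_ifs at h) <;>
    omega

variable (k) in
lemma exists_isNearOrthomorphism :
    ∃ σ : Equiv.Perm (Fin k), IsNearOrthomorphism σ :=
  (Nat.even_or_odd k).elim exists_isNearOrthomorphism_of_even exists_isNearOrthomorphism_of_odd

end Fin

namespace kkPlusUniversal

variable {k : ℕ}

@[simp] lemma adj_none_some (a : Fin k ⊕ Fin k) : (kkPlusUniversal k).Adj none (some a) := by
  simp [kkPlusUniversal]

@[simp] lemma adj_some_none (a : Fin k ⊕ Fin k) : (kkPlusUniversal k).Adj (some a) none :=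
  (adj_none_some a).symm

@[simp] lemma adj_some_some {a b : Fin k ⊕ Fin k} :
    (kkPlusUniversal k).Adj (some a) (some b) ↔ a.isLeft ≠ b.isLeft := by
  cases a <;> cases b <;> simp [kkPlusUniversal]

lemma card_isLeft_eq (s : Bool) : #{a : Fin k ⊕ Fin k | a.isLeft = s} = k := by
  rw [card_filter, Fintype.sum_sum_type]
  cases s <;> simp

lemma card_isLeft_ne (s : Bool) : #{a : Fin k ⊕ Fin k | a.isLeft ≠ s} = k := by
  rw [card_filter, Fintype.sum_sum_type]
  cases s <;> simp

lemma degree_none : (kkPlusUniversal k).degree none = 2 * k := by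
  rw [← card_neighborFinset_eq_degree, neighborFinset_eq_filter, card_filter,
    Fintype.sum_option, Fintype.sum_sum_type]
  simp [two_mul]

lemma degree_some (a : Fin k ⊕ Fin k) : (kkPlusUniversal k).degree (some a) = k + 1 := by
  rw [← card_neighborFinset_eq_degree, neighborFinset_eq_filter, card_filter,
    Fintype.sum_option, Fintype.sum_sum_type]
  cases a <;> simp [add_comm]

lemma colorDeg_none_eq_card {m : ℕ} (c : Sym2 (Option (Fin k ⊕ Fin k)) → Fin m) (t : Fin m) :
    colorDeg (kkPlusUniversal k) c t none = #{x | c s(none, some x) = t} := by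
  rw [colorDeg_eq_degree_colorClass, ← card_neighborFinset_eq_degree, neighborFinset_eq_filter,
    card_filter, Fintype.sum_option, card_filter]
  simp

section UpperBound

/-- The Latin square `σ (j - i)`, with its diagonal moved to the extra colour `k` (the star at `u`
uses `σ 0`) and the cells with `σ (j - i) = j` moved to `k + 1` (the edge `u r_j` uses `j`). -/
def bipartiteColor (σ : Equiv.Perm (Fin k)) (i j : Fin k) : Fin (k + 2) :=
  if i = j then Fin.natAdd k 0
  else if σ (j - i) = j then Fin.natAdd k 1
  else Fin.castAdd 2 (σ (j - i))

lemma bipartiteColor_ne_castAdd_right {σ : Equiv.Perm (Fin k)} (i j : Fin k) :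
    bipartiteColor σ i j ≠ Fin.castAdd 2 j := by
  unfold bipartiteColor
  split_ifs with hij hj
  · simp
  · simp
  · simpa using hj

variable [NeZero k] (σ : Equiv.Perm (Fin k))

def nearOrthoColorFun : Option (Fin k ⊕ Fin k) → Option (Fin k ⊕ Fin k) → Fin (k + 2)
  | none, some (.inl _) | some (.inl _), none => Fin.castAdd 2 (σ 0)
  | none, some (.inr j) | some (.inr j), none => Fin.castAdd 2 j
  | some (.inl i), some (.inr j) | some (.inr j), some (.inl i) => bipartiteColor σ i j
  | _, _ => 0

def nearOrthoColoring : Sym2 (Option (Fin k ⊕ Fin k)) → Fin (k + 2) :=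
  Sym2.lift ⟨nearOrthoColorFun σ, fun v w => by
    rcases v with _ | _ | _ <;> rcases w with _ | _ | _ <;> rfl⟩

variable {σ}

lemma bipartiteColor_ne_castAdd_zero (i j : Fin k) :
    bipartiteColor σ i j ≠ Fin.castAdd 2 (σ 0) := by
  unfold bipartiteColor
  split_ifs with hij
  · simp
  · simp
  · simp only [ne_eq, Fin.castAdd_inj, EmbeddingLike.apply_eq_iff_eq, sub_eq_zero]
    exact Ne.symm hij

lemma bipartiteColor_injective_left (j : Fin k) : Function.Injective (bipartiteColor σ · j) := by
  intro i i' h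
  simp only [bipartiteColor] at h
  split_ifs at h <;> simp at h
  · rename_i hi hi'
    exact hi.trans hi'.symm
  · rename_i _ hσi _ hσi'
    exact sub_right_injective (σ.injective (hσi.trans hσi'.symm))
  · exact h

/-- The cells of colour `k + 1` in row `i` are the `j` with `σ (j - i) - (j - i) = i`. -/
lemma bipartiteColor_injective_right (hσ : IsNearOrthomorphism σ) (i : Fin k) :
    Function.Injective (bipartiteColor σ i) := by
  intro j j' h
  simp only [bipartiteColor] at h
  split_ifs at h <;> simp at h
  · rename_i hj hj'
    exact hj.symm.trans hj'
  · rename_i hij hσj hij' hσj'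
    refine sub_left_injective
      (hσ (sub_ne_zero.mpr (Ne.symm hij)) (sub_ne_zero.mpr (Ne.symm hij')) ?_)
    simp only [hσj, hσj', sub_sub_cancel]
  · exact h

lemma nearOrthoColoring_mk (v w : Option (Fin k ⊕ Fin k)) :
    nearOrthoColoring σ s(v, w) = nearOrthoColorFun σ v w := rfl

lemma colorDeg_nearOrthoColoring_inl_le_one (hσ : IsNearOrthomorphism σ) (t : Fin (k + 2))
    (i : Fin k) : colorDeg (kkPlusUniversal k) (nearOrthoColoring σ) t (some (.inl i)) ≤ 1 := by
  refine colorDeg_le_one_of_injOn (fun w hw w' hw' h => ?_) t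
  rcases w with _ | i₁ | j₁ <;> rcases w' with _ | i₂ | j₂ <;>
    simp_all [nearOrthoColoring_mk, nearOrthoColorFun, bipartiteColor_ne_castAdd_zero,
      fun j => (bipartiteColor_ne_castAdd_zero (σ := σ) i j).symm,
      (bipartiteColor_injective_right hσ i).eq_iff]

lemma colorDeg_nearOrthoColoring_inr_le_one (t : Fin (k + 2)) (j : Fin k) :
    colorDeg (kkPlusUniversal k) (nearOrthoColoring σ) t (some (.inr j)) ≤ 1 := by
  refine colorDeg_le_one_of_injOn (fun w hw w' hw' h => ?_) t
  rcases w with _ | i₁ | j₁ <;> rcases w' with _ | i₂ | j₂ <;>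
    simp_all [nearOrthoColoring_mk, nearOrthoColorFun, bipartiteColor_ne_castAdd_right,
      fun i => (bipartiteColor_ne_castAdd_right (σ := σ) i j).symm,
      (bipartiteColor_injective_left (σ := σ) j).eq_iff]

lemma colorDeg_nearOrthoColoring_none_le_one {t : Fin (k + 2)} (ht : t ≠ Fin.castAdd 2 (σ 0)) :
    colorDeg (kkPlusUniversal k) (nearOrthoColoring σ) t none ≤ 1 := by
  refine colorDeg_le_one fun w w' hw hw' hcw hcw' => ?_
  rcases w with _ | i₁ | j₁ <;> rcases w' with _ | i₂ | j₂ <;>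
    simp_all [nearOrthoColoring_mk, nearOrthoColorFun]
  exact Fin.castAdd_injective k 2 (hcw.trans hcw'.symm)

lemma colorDeg_nearOrthoColoring_none_castAdd :
    colorDeg (kkPlusUniversal k) (nearOrthoColoring σ) (Fin.castAdd 2 (σ 0)) none = k + 1 := by
  rw [colorDeg_none_eq_card, card_filter, Fintype.sum_sum_type]
  simp [nearOrthoColoring_mk, nearOrthoColorFun]

theorem isChiPrimeKColoring_nearOrthoColoring (hk : 2 ≤ k) (hσ : IsNearOrthomorphism σ) :
    IsChiPrimeKColoring (kkPlusUniversal k) k (nearOrthoColoring σ) := by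
  intro t v
  suffices h : colorDeg (kkPlusUniversal k) (nearOrthoColoring σ) t v ≤ 1 ∨
      colorDeg (kkPlusUniversal k) (nearOrthoColoring σ) t v = k + 1 by
    have h1 : 1 % k = 1 := Nat.mod_eq_of_lt hk
    rcases h with h | h
    · interval_cases colorDeg (kkPlusUniversal k) (nearOrthoColoring σ) t v <;> simp [h1]
    · simp [h, h1]
  rcases v with _ | i | j
  · by_cases ht : t = Fin.castAdd 2 (σ 0)
    · exact Or.inr (ht ▸ colorDeg_nearOrthoColoring_none_castAdd)
    · exact Or.inl (colorDeg_nearOrthoColoring_none_le_one ht)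
  · exact Or.inl (colorDeg_nearOrthoColoring_inl_le_one hσ t i)
  · exact Or.inl (colorDeg_nearOrthoColoring_inr_le_one t j)

end UpperBound

section LowerBound

variable {m : ℕ} {c : Sym2 (Option (Fin k ⊕ Fin k)) → Fin m}
  (hc : IsChiPrimeKColoring (kkPlusUniversal k) k c)
include hc

lemma colorDeg_eq_zero_or_eq_one_or_eq_add_one (t : Fin m) (v : Option (Fin k ⊕ Fin k)) :
    colorDeg (kkPlusUniversal k) c t v = 0 ∨ colorDeg (kkPlusUniversal k) c t v = 1 ∨
      colorDeg (kkPlusUniversal k) c t v = k + 1 := by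
  have hle : colorDeg (kkPlusUniversal k) c t v ≤ 2 * k := by
    refine (colorDeg_le_degree t v).trans ?_
    cases v with
    | none => rw [degree_none]
    | some a =>
      have : 0 < k := a.elim Fin.pos Fin.pos
      rw [degree_some]
      omega
  exact (hc t v).imp_right (Nat.eq_one_or_eq_add_one_of_mod_eq_one hle)

lemma isMonochromaticAt_of_two_le_colorDeg {t : Fin m} {a : Fin k ⊕ Fin k}
    (h2 : 2 ≤ colorDeg (kkPlusUniversal k) c t (some a)) :
    IsMonochromaticAt (kkPlusUniversal k) c t (some a) := by
  refine colorDeg_eq_degree_iff.mp ?_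
  rcases colorDeg_eq_zero_or_eq_one_or_eq_add_one hc t (some a) with h | h | h
  · omega
  · omega
  · rw [h, degree_some]

lemma isMonochromaticAt_of_two_edges {t : Fin m} {a : Fin k ⊕ Fin k}
    {w w' : Option (Fin k ⊕ Fin k)} (hne : w ≠ w') (hw : (kkPlusUniversal k).Adj (some a) w)
    (hw' : (kkPlusUniversal k).Adj (some a) w') (hcw : c s(some a, w) = t)
    (hcw' : c s(some a, w') = t) : IsMonochromaticAt (kkPlusUniversal k) c t (some a) :=
  isMonochromaticAt_of_two_le_colorDeg hc (two_le_colorDeg hne hw hw' hcw hcw')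

lemma colorDeg_eq_one_of_forall_not_isMonochromaticAt (hm : m ≤ k + 1) {a : Fin k ⊕ Fin k}
    (ha : ∀ σ, ¬ IsMonochromaticAt (kkPlusUniversal k) c σ (some a)) (t : Fin m) :
    colorDeg (kkPlusUniversal k) c t (some a) = 1 := by
  have hle : ∀ σ, colorDeg (kkPlusUniversal k) c σ (some a) ≤ 1 := fun σ => by
    by_contra! h
    exact ha σ (isMonochromaticAt_of_two_le_colorDeg hc h)
  by_contra ht
  have hsum : ∑ σ, colorDeg (kkPlusUniversal k) c σ (some a) < ∑ _σ : Fin m, 1 :=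
    sum_lt_sum (fun σ _ => hle σ) ⟨t, mem_univ t, by have := hle t; omega⟩
  rw [sum_colorDeg, degree_some] at hsum
  simp at hsum
  omega

variable (hk : 2 ≤ k)
include hk

lemma exists_colorDeg_none_eq_one : ∃ t, colorDeg (kkPlusUniversal k) c t none = 1 := by
  by_contra! h
  have hdvd : k + 1 ∣ ∑ t, colorDeg (kkPlusUniversal k) c t none :=
    dvd_sum fun t _ => by
      rcases colorDeg_eq_zero_or_eq_one_or_eq_add_one hc t none with h' | h' | h'
      · simp [h']
      · exact absurd h' (h t)
      · simp [h']
  rw [sum_colorDeg, degree_none] at hdvd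
  have := Nat.eq_of_dvd_of_lt_two_mul (by omega) hdvd (by omega)
  omega

lemma exists_isMonochromaticAt (hm : m ≤ k + 1) :
    ∃ t a, IsMonochromaticAt (kkPlusUniversal k) c t (some a) := by
  by_contra! h
  obtain ⟨t, ht⟩ := exists_colorDeg_none_eq_one hc hk
  have heven := even_sum_colorDeg (G := kkPlusUniversal k) (c := c) t
  rw [Fintype.sum_option, ht,
    sum_congr rfl fun a _ => colorDeg_eq_one_of_forall_not_isMonochromaticAt hc hm (h · a) t]
    at heven
  simp at heven
  obtain ⟨r, hr⟩ := heven
  omega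

/-- Otherwise the vertices opposite `a` and `b` see `τ` twice, then so do those on the side of `a`,
and `τ` would have degree `2k` at `u`. -/
lemma eq_of_isMonochromaticAt_of_isLeft_eq {τ : Fin m} {a b : Fin k ⊕ Fin k}
    (ha : IsMonochromaticAt (kkPlusUniversal k) c τ (some a))
    (hb : IsMonochromaticAt (kkPlusUniversal k) c τ (some b)) (hab : a.isLeft = b.isLeft) :
    a = b := by
  by_contra hne
  have hopp : ∀ x : Fin k ⊕ Fin k, x.isLeft ≠ a.isLeft →
      IsMonochromaticAt (kkPlusUniversal k) c τ (some x) := fun x hx =>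
    isMonochromaticAt_of_two_edges hc (t := τ) (w := some a) (w' := some b) (by simpa using hne)
      (by simpa using hx) (by simpa [← hab] using hx)
      (ha.color_eq_of_adj (by simpa using hx))
      (hb.color_eq_of_adj (by simpa [← hab] using hx))
  have hall : ∀ x : Fin k ⊕ Fin k, IsMonochromaticAt (kkPlusUniversal k) c τ (some x) := by
    intro x
    by_cases hx : x.isLeft = a.isLeft
    · obtain ⟨y, hy, y', hy', hyy'⟩ :=
        one_lt_card.mp (show 1 < #{y : Fin k ⊕ Fin k | y.isLeft ≠ a.isLeft} by
          rw [card_isLeft_ne]; omega)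
      simp only [mem_filter, mem_univ, true_and] at hy hy'
      exact isMonochromaticAt_of_two_edges hc (t := τ) (w := some y) (w' := some y')
        (by simpa using hyy')
        (by simpa [hx] using hy.symm) (by simpa [hx] using hy'.symm)
        ((hopp y hy).color_eq_of_adj (by simpa [hx] using hy.symm))
        ((hopp y' hy').color_eq_of_adj (by simpa [hx] using hy'.symm))
    · exact hopp x hx
  have hdeg : colorDeg (kkPlusUniversal k) c τ none = 2 * k := by
    rw [← degree_none, colorDeg_eq_degree_iff]
    rintro (_ | x) hx
    · simp at hx
    · rw [Sym2.eq_swap]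
      exact hall x none (adj_some_none x)
  rcases colorDeg_eq_zero_or_eq_one_or_eq_add_one hc τ none with h | h | h <;> omega

/-- Otherwise `τ` has degree `k + 1` at `u`, so some `τ`-neighbour `y` of `u` lies opposite `a`.
Every `τ`-neighbour of `u` is then `τ`-monochromatic, using its edges to `u` and to `a` or `y`,
and by the previous lemma there are at most two of them. -/
lemma eq_of_isMonochromaticAt_of_color_none {τ : Fin m} {a b : Fin k ⊕ Fin k}
    (ha : IsMonochromaticAt (kkPlusUniversal k) c τ (some a)) (hb : c s(none, some b) = τ) :
    b = a := by
  by_contra hne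
  have hτa : c s(none, some a) = τ := ha.color_eq_of_adj (adj_none_some a)
  have hcard : #{x | c s(none, some x) = τ} = k + 1 := by
    have := two_le_colorDeg (w := some b) (w' := some a) (by simpa using hne) (adj_none_some _)
      (adj_none_some _) hb hτa
    rw [← colorDeg_none_eq_card]
    rcases colorDeg_eq_zero_or_eq_one_or_eq_add_one hc τ none with h | h | h <;> omega
  obtain ⟨y, hy, hya⟩ : ∃ y, c s(none, some y) = τ ∧ y.isLeft ≠ a.isLeft := by
    by_contra! h
    have := card_le_card (s := {x | c s(none, some x) = τ})
      (t := {x : Fin k ⊕ Fin k | x.isLeft = a.isLeft}) fun x hx => by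
        simp only [mem_filter, mem_univ, true_and] at hx ⊢
        exact h x hx
    rw [hcard, card_isLeft_eq] at this
    omega
  have hy_mono := isMonochromaticAt_of_two_edges hc (t := τ) (w := none) (w' := some a) (by simp)
    (adj_some_none y) (by simpa using hya) (by rwa [Sym2.eq_swap])
    (ha.color_eq_of_adj (by simpa using hya))
  have hsub : ({x | c s(none, some x) = τ} : Finset _) ⊆ {a, y} := by
    intro x hx
    simp only [mem_filter, mem_univ, true_and, mem_insert, mem_singleton] at hx ⊢
    by_cases hxa : x.isLeft = a.isLeft
    · refine Or.inl (eq_of_isMonochromaticAt_of_isLeft_eq hc hk ?_ ha hxa)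
      exact isMonochromaticAt_of_two_edges hc (t := τ) (w := none) (w' := some y) (by simp)
        (adj_some_none x)
        (by simpa [hxa] using hya.symm) (by rwa [Sym2.eq_swap])
        (hy_mono.color_eq_of_adj (by simpa [hxa] using hya.symm))
    · refine Or.inr (eq_of_isMonochromaticAt_of_isLeft_eq hc hk ?_ hy_mono
        (Bool.eq_of_ne_of_ne hxa hya))
      exact isMonochromaticAt_of_two_edges hc (t := τ) (w := none) (w' := some a) (by simp)
        (adj_some_none x)
        (by simpa using hxa) (by rwa [Sym2.eq_swap])
        (ha.color_eq_of_adj (by simpa using hxa))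
  have := (card_le_card hsub).trans card_le_two
  omega

lemma eq_of_isMonochromaticAt {τ : Fin m} {a b : Fin k ⊕ Fin k}
    (ha : IsMonochromaticAt (kkPlusUniversal k) c τ (some a))
    (hb : IsMonochromaticAt (kkPlusUniversal k) c τ (some b)) : a = b :=
  (eq_of_isMonochromaticAt_of_color_none hc hk ha
    (hb.color_eq_of_adj (adj_none_some b))).symm

lemma colorDeg_eq_zero_of_isMonochromaticAt {τ : Fin m} {a b : Fin k ⊕ Fin k}
    (ha : IsMonochromaticAt (kkPlusUniversal k) c τ (some a)) (hb : b.isLeft = a.isLeft)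
    (hba : b ≠ a) : colorDeg (kkPlusUniversal k) c τ (some b) = 0 := by
  by_contra h
  obtain ⟨w, hw, hcw⟩ := colorDeg_pos_iff.mp (Nat.pos_of_ne_zero h)
  cases w with
  | none => exact hba (eq_of_isMonochromaticAt_of_color_none hc hk ha (by rwa [Sym2.eq_swap]))
  | some x =>
    have hx : x.isLeft ≠ a.isLeft := by simpa [hb, eq_comm] using hw
    have hx_mono := isMonochromaticAt_of_two_edges hc (t := τ) (w := some b) (w' := some a)
      (by simpa using hba) (by simpa [hb] using hx) (by simpa using hx)
      (by rwa [Sym2.eq_swap]) (ha.color_eq_of_adj (by simpa using hx))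
    exact hx (congrArg Sum.isLeft (eq_of_isMonochromaticAt hc hk hx_mono ha))

theorem add_two_le_of_isChiPrimeKColoring : k + 2 ≤ m := by
  by_contra! hm
  replace hm : m ≤ k + 1 := by omega
  obtain ⟨τ, a, ha⟩ := exists_isMonochromaticAt hc hk hm
  have hside : ∀ b, b.isLeft = a.isLeft →
      ∃ σ, IsMonochromaticAt (kkPlusUniversal k) c σ (some b) := by
    intro b hb
    by_cases hba : b = a
    · exact ⟨τ, hba ▸ ha⟩
    · by_contra! h
      have := colorDeg_eq_one_of_forall_not_isMonochromaticAt hc hm h τ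
      rw [colorDeg_eq_zero_of_isMonochromaticAt hc hk ha hb hba] at this
      omega
  obtain ⟨q, hq⟩ : ∃ q : Fin k ⊕ Fin k, q.isLeft ≠ a.isLeft := by
    obtain ⟨q, hq⟩ := card_pos.mp
      (show 0 < #{q : Fin k ⊕ Fin k | q.isLeft ≠ a.isLeft} by rw [card_isLeft_ne]; omega)
    exact ⟨q, (mem_filter.mp hq).2⟩
  obtain ⟨ρ, hρ⟩ : ∃ ρ, c s(none, some q) = ρ := ⟨_, rfl⟩
  have hnotρ : ∀ b, b.isLeft = a.isLeft →
      ¬ IsMonochromaticAt (kkPlusUniversal k) c ρ (some b) :=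
    fun b hb hbρ => hq (eq_of_isMonochromaticAt_of_color_none hc hk hbρ hρ ▸ hb)
  have hcolor : ∀ x, c s(none, some x) = ρ ↔ x.isLeft ≠ a.isLeft := by
    intro x
    constructor
    · intro hx hxa
      obtain ⟨σ, hσ⟩ := hside x hxa
      have hσρ : σ = ρ := (hσ.color_eq_of_adj (adj_none_some x)).symm.trans hx
      exact hnotρ x hxa (hσρ ▸ hσ)
    · intro hxa
      have hx_not : ∀ σ, ¬ IsMonochromaticAt (kkPlusUniversal k) c σ (some x) := by
        intro σ hσ
        have hadj : (kkPlusUniversal k).Adj (some x) (some a) := by simpa using hxa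
        have hστ : σ = τ := (hσ (some a) hadj).symm.trans (ha.color_eq_of_adj hadj)
        subst hστ
        exact hxa (congrArg Sum.isLeft (eq_of_isMonochromaticAt hc hk hσ ha))
      obtain ⟨w, hw, hcw⟩ := colorDeg_pos_iff.mp
        (by rw [colorDeg_eq_one_of_forall_not_isMonochromaticAt hc hm hx_not ρ]; omega)
      cases w with
      | none => rwa [Sym2.eq_swap]
      | some b =>
        have hb : b.isLeft = a.isLeft :=
          Bool.eq_of_ne_of_ne (by simpa [eq_comm] using hw) (Ne.symm hxa)
        obtain ⟨σ, hσ⟩ := hside b hb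
        have hσρ : σ = ρ := (hσ.color_eq_of_adj hw).symm.trans hcw
        exact (hnotρ b hb (hσρ ▸ hσ)).elim
  have hdeg : colorDeg (kkPlusUniversal k) c ρ none = k := by
    rw [colorDeg_none_eq_card, filter_congr fun x _ => hcolor x, card_isLeft_ne]
  rcases colorDeg_eq_zero_or_eq_one_or_eq_add_one hc ρ none with h | h | h <;> omega

end LowerBound

end kkPlusUniversal

theorem chi_prime_k_kk_plus_universal (k : ℕ) (hk : 2 ≤ k) :
    (∃ c : Sym2 (Option (Fin k ⊕ Fin k)) → Fin (k + 2),
      IsChiPrimeKColoring (kkPlusUniversal k) k c) ∧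
    (∀ m : ℕ, (∃ c : Sym2 (Option (Fin k ⊕ Fin k)) → Fin m,
      IsChiPrimeKColoring (kkPlusUniversal k) k c) → k + 2 ≤ m) := by
  have : NeZero k := ⟨by omega⟩
  obtain ⟨σ, hσ⟩ := Fin.exists_isNearOrthomorphism k
  exact ⟨⟨_, kkPlusUniversal.isChiPrimeKColoring_nearOrthoColoring hk hσ⟩,
    fun m ⟨c, hc⟩ => kkPlusUniversal.add_two_le_of_isChiPrimeKColoring hc hk⟩
end

section
/- Let k ≥ 2 and let G be a graph. Let H be a subgraph of G, maximal (with respect to edge inclusion) among subgraphs in which every vertex has degree congruent to 1 mod k. Then in the graph G' obtained from G by deleting the edges of H: (a) the vertex set V(G) \ V(H) is independent in G', and (b) every vertex of H has at most k − 1 neighbors in V(G) \ V(H) in G'. -/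
/-- All vertices of the support of `H` (vertices incident to an edge of `H`) have
degree congruent to 1 modulo `k` in `H`. -/
def AllDegOneModK {V : Type*} (H : SimpleGraph V) (k : ℕ) : Prop :=
  ∀ v ∈ H.support, Nat.card (H.neighborSet v) % k = 1

section Aux

variable {V : Type*} [Fintype V] [DecidableEq V]

omit [Fintype V] [DecidableEq V] in
lemma star_adj (v : V) (S : Set V) (hv : v ∉ S) (a b : V) :
    (SimpleGraph.fromEdgeSet ((fun u => s(v,u)) '' S)).Adj a b ↔
      (a = v ∧ b ∈ S) ∨ (b = v ∧ a ∈ S) := by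
  simp only [SimpleGraph.fromEdgeSet_adj, Set.mem_image]
  constructor
  · rintro ⟨⟨u, hu, heq⟩, hne⟩
    rw [Sym2.eq_iff] at heq
    rcases heq with ⟨h1, h2⟩ | ⟨h1, h2⟩
    · exact Or.inl ⟨h1.symm, h2 ▸ hu⟩
    · exact Or.inr ⟨h1.symm, h2 ▸ hu⟩
  · rintro (⟨rfl, hb⟩ | ⟨rfl, ha⟩)
    · exact ⟨⟨b, hb, rfl⟩, fun h => hv (h ▸ hb)⟩
    · exact ⟨⟨a, ha, Sym2.eq_swap⟩, fun h => hv (h ▸ ha)⟩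

lemma key (k : ℕ) (hk : 2 ≤ k) (G H : SimpleGraph V) (hHG : H ≤ G)
    (hH : AllDegOneModK H k)
    (hmax : ∀ H' : SimpleGraph V, H' ≤ G → H.edgeSet ⊂ H'.edgeSet →
      ¬ AllDegOneModK H' k)
    (v : V) (S : Set V)
    (hS : ∀ u ∈ S, (G.deleteEdges H.edgeSet).Adj v u ∧ u ∉ H.support)
    (hne : S.Nonempty)
    (hmod0 : v ∈ H.support → S.ncard % k = 0)
    (hmod1 : v ∉ H.support → S.ncard % k = 1) : False := by
  have hvS : v ∉ S := fun h => (G.deleteEdges H.edgeSet).irrefl (hS v h).1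
  have hdel : ∀ u ∈ S, G.Adj v u ∧ s(v,u) ∉ H.edgeSet := by
    intro u hu
    have h := (hS u hu).1
    rw [SimpleGraph.deleteEdges_adj] at h
    exact h
  set H' : SimpleGraph V := H ⊔ SimpleGraph.fromEdgeSet ((fun u => s(v,u)) '' S) with hH'def
  have hadj : ∀ a b, H'.Adj a b ↔ H.Adj a b ∨ (a = v ∧ b ∈ S) ∨ (b = v ∧ a ∈ S) := by
    intro a b
    rw [hH'def, SimpleGraph.sup_adj, star_adj v S hvS]
  have hle : H' ≤ G := by
    intro a b hab
    rcases (hadj a b).1 hab with h | ⟨rfl, hb⟩ | ⟨rfl, ha⟩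
    · exact hHG h
    · exact (hdel b hb).1
    · exact ((hdel a ha).1).symm
  have hsub : H.edgeSet ⊂ H'.edgeSet := by
    refine ⟨SimpleGraph.edgeSet_mono le_sup_left, ?_⟩
    obtain ⟨u, hu⟩ := hne
    intro hcon
    have h1 : s(v,u) ∈ H'.edgeSet := by
      rw [SimpleGraph.mem_edgeSet, hadj]
      exact Or.inr (Or.inl ⟨rfl, hu⟩)
    exact (hdel u hu).2 (hcon h1)
  apply hmax H' hle hsub
  intro w hw
  have hnot : ∀ x, x ∉ H.support → H.neighborSet x = ∅ := by
    intro x hx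
    ext y
    simp only [SimpleGraph.mem_neighborSet, Set.mem_empty_iff_false, iff_false]
    exact fun h => hx ⟨y, h⟩
  by_cases hwv : w = v
  · subst hwv
    have hset : H'.neighborSet w = H.neighborSet w ∪ S := by
      ext x
      rw [SimpleGraph.mem_neighborSet, hadj, Set.mem_union, SimpleGraph.mem_neighborSet]
      constructor
      · rintro (h | ⟨-, h⟩ | ⟨rfl, h⟩)
        · exact Or.inl h
        · exact Or.inr h
        · exact absurd h hvS
      · rintro (h | h)
        · exact Or.inl h
        · exact Or.inr (Or.inl ⟨rfl, h⟩)
    have hdisj : Disjoint (H.neighborSet w) S := by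
      rw [Set.disjoint_left]
      intro x hx hxS
      exact (hS x hxS).2 ⟨w, hx.symm⟩
    rw [Nat.card_coe_set_eq, hset,
      Set.ncard_union_eq hdisj (Set.toFinite _) (Set.toFinite _)]
    by_cases hvsupp : w ∈ H.support
    · have h1 := hH w hvsupp
      rw [Nat.card_coe_set_eq] at h1
      rw [Nat.add_mod, h1, hmod0 hvsupp]
      simpa using Nat.mod_eq_of_lt (show 1 < k by omega)
    · rw [hnot w hvsupp, Set.ncard_empty, zero_add]
      exact hmod1 hvsupp
  · by_cases hwS : w ∈ S
    · have hset : H'.neighborSet w = {v} := by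
        ext x
        rw [SimpleGraph.mem_neighborSet, hadj, Set.mem_singleton_iff]
        constructor
        · rintro (h | ⟨rfl, h⟩ | ⟨rfl, h⟩)
          · exact absurd (⟨x, h⟩ : w ∈ H.support) (hS w hwS).2
          · exact absurd rfl hwv
          · rfl
        · rintro rfl
          exact Or.inr (Or.inr ⟨rfl, hwS⟩)
      rw [Nat.card_coe_set_eq, hset, Set.ncard_singleton]
      exact Nat.mod_eq_of_lt (by omega)
    · have hset : H'.neighborSet w = H.neighborSet w := by
        ext x
        rw [SimpleGraph.mem_neighborSet, hadj, SimpleGraph.mem_neighborSet]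
        constructor
        · rintro (h | ⟨rfl, h⟩ | ⟨rfl, h⟩)
          · exact h
          · exact absurd rfl hwv
          · exact absurd h hwS
        · exact fun h => Or.inl h
      have hwsupp : w ∈ H.support := by
        obtain ⟨x, hx⟩ := hw
        rcases (hadj w x).1 hx with h | ⟨rfl, h⟩ | ⟨rfl, h⟩
        · exact ⟨x, h⟩
        · exact absurd rfl hwv
        · exact absurd h hwS
      rw [Nat.card_coe_set_eq, hset, ← Nat.card_coe_set_eq]
      exact hH w hwsupp

end Aux

theorem maximal_mod_one_subgraph (k : ℕ) (hk : 2 ≤ k)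
    {V : Type*} [Fintype V] [DecidableEq V] (G : SimpleGraph V)
    (H : SimpleGraph V) (hHG : H ≤ G) (hH : AllDegOneModK H k)
    (hmax : ∀ H' : SimpleGraph V, H' ≤ G → H.edgeSet ⊂ H'.edgeSet →
      ¬ AllDegOneModK H' k) :
    (∀ u v : V, u ∉ H.support → v ∉ H.support → ¬ (G.deleteEdges H.edgeSet).Adj u v) ∧
    (∀ v ∈ H.support,
      Nat.card {u : V | (G.deleteEdges H.edgeSet).Adj v u ∧ u ∉ H.support} ≤ k - 1) := by
  constructor
  · intro u v hu hv hadj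
    refine key k hk G H hHG hH hmax u {v} ?_ ⟨v, rfl⟩ (fun h => absurd h hu) ?_
    · rintro x rfl
      exact ⟨hadj, hv⟩
    · intro _
      rw [Set.ncard_singleton]
      exact Nat.mod_eq_of_lt (by omega)
  · intro v hv
    by_contra hcon
    set T : Set V := {u : V | (G.deleteEdges H.edgeSet).Adj v u ∧ u ∉ H.support} with hT
    rw [Nat.card_coe_set_eq] at hcon
    have hkT : k ≤ T.ncard := by omega
    obtain ⟨S, hST, hScard⟩ := Set.exists_subset_card_eq hkT
    refine key k hk G H hHG hH hmax v S (fun u hu => hST hu) ?_ ?_ (fun h => absurd hv h)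
    · exact Set.nonempty_of_ncard_ne_zero (by omega)
    · intro _
      rw [hScard, Nat.mod_self]
end

section
/- Assuming that for every k ≥ 2 every graph on n vertices with at least (k−1)n + 1 edges contains a non-empty subgraph all of whose degrees are divisible by k, it follows that χ'_k(G) ≤ 14k − 9 for every graph G. -/
/-!
Let `H` be a maximal set of edges of `G` in which every degree is `0` or `1 (mod k)`; it is one
colour class. The other edges `E = E(G) \ H` form a `3(k-1)`-degenerate graph. Indeed, in a vertex
set `T` let `A` be the vertices touched by `H`. By maximality of `H`, no edge of `E` joins two
vertices outside `A`; a vertex of `A` has fewer than `k` edges of `E` to vertices outside `A`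
(otherwise `k` of them could be added to `H`); and `E` has at most `(k-1)|A|` edges inside `A`
(otherwise the AFK hypothesis gives a nonempty subgraph with all degrees divisible by `k`, which
could be added to `H`). So the degrees in `E[T]` sum to at most `3(k-1)|A|` over `A`.

A `d`-degenerate `E` is coloured with a pool and a reserve of `p ≥ 2d + k - 1` colours each, by
processing vertices in degeneracy order; the invariant is that every colour occurs at most once at
each unprocessed vertex. When `a` is processed, each edge from `a` to a later vertex `x` must avoid
the at most `2d - 1` colours already at `a` or `x`. While some pool colour is available to more than
`k` of these edges, it is given to a largest set of them of size `1 (mod k)`; the remaining edges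
get distinct reserve colours, by Hall's theorem. With `d = 3(k-1)` and `p = 7(k-1)` this uses
`14(k-1) + 1 ≤ 14k - 9` colours.
-/

open Finset

namespace ChiPrimeK

def ZeroOrOneMod (k n : ℕ) : Prop := n = 0 ∨ n % k = 1

lemma zeroOrOneMod_of_le_one {k n : ℕ} (hk : 2 ≤ k) (hn : n ≤ 1) : ZeroOrOneMod k n := by
  rcases Nat.le_one_iff_eq_zero_or_eq_one.1 hn with rfl | rfl
  · exact Or.inl rfl
  · exact Or.inr (Nat.mod_eq_of_lt hk)

section Allocation

variable {ι α : Type*} [DecidableEq α] {k p : ℕ} {pool reserve : Finset α}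

lemma filter_piecewise_union [DecidableEq ι] {s t : Finset ι} (h : Disjoint s t) (f g : ι → α)
    (c : α) :
    {e ∈ s ∪ t | t.piecewise f g e = c} = {e ∈ s | g e = c} ∪ {e ∈ t | f e = c} := by
  ext e
  by_cases het : e ∈ t
  · simp [het, disjoint_right.1 h het]
  · simp [het]

lemma card_add_card_le_card_sdiff_add_card_sdiff_add {s t : Finset α} (h : Disjoint s t)
    (F : Finset α) : #s + #t ≤ #(s \ F) + #(t \ F) + #F := by
  have hinter : #(s ∩ F) + #(t ∩ F) ≤ #F := by
    rw [← card_union_of_disjoint (h.mono inter_subset_left inter_subset_left)]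
    exact card_le_card (union_subset inter_subset_right inter_subset_right)
  have := card_sdiff_add_card_inter s F
  have := card_sdiff_add_card_inter t F
  omega

lemma sum_card_sdiff_eq_sum_card_filter (I : Finset ι) (s : Finset α) (F : ι → Finset α) :
    ∑ e ∈ I, #(s \ F e) = ∑ c ∈ s, #{e ∈ I | c ∉ F e} := by
  simpa [bipartiteAbove, bipartiteBelow, sdiff_eq_filter] using
    sum_card_bipartiteAbove_eq_sum_card_bipartiteBelow (s := I) (t := s) fun e c => c ∉ F e

lemma exists_subset_card_mod_eq_one (hk : 2 ≤ k) {T : Finset ι} (hT : T.Nonempty) :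
    ∃ T₀ ⊆ T, T₀.Nonempty ∧ #T₀ % k = 1 ∧ #T < #T₀ + k := by
  have hq := Nat.div_add_mod (#T - 1) k
  have hr := Nat.mod_lt (#T - 1) (by omega : 0 < k)
  have hT := hT.card_pos
  obtain ⟨T₀, hT₀T, hT₀⟩ := exists_subset_card_eq (s := T) (n := k * ((#T - 1) / k) + 1)
    (by omega)
  refine ⟨T₀, hT₀T, card_pos.1 (by omega), ?_, by omega⟩
  rw [hT₀, Nat.mul_add_mod, Nat.mod_eq_of_lt hk]

lemma card_le_card_biUnion_reserve (hk : 0 < k) (hdisj : Disjoint pool reserve)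
    (hpool : #pool = p) (hres : #reserve = p) {I : Finset ι} {forb : ι → Finset α}
    (hforb : ∀ e ∈ I, #(forb e) + k ≤ p) (hfew : ∀ c ∈ pool, #{e ∈ I | c ∉ forb e} ≤ k)
    {J : Finset ι} (hJI : J ⊆ I) : #J ≤ #(J.biUnion fun e => reserve \ forb e) := by
  rcases J.eq_empty_or_nonempty with rfl | hJ
  · simp
  obtain ⟨e₀, he₀, hmax⟩ := J.exists_max_image (fun e => #(reserve \ forb e)) hJ
  set B := #(reserve \ forb e₀)
  have hBp : B ≤ p := hres ▸ card_le_card sdiff_subset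
  have hkB : k ≤ B := by
    have := le_card_sdiff (forb e₀) reserve
    have := hforb e₀ (hJI he₀)
    omega
  -- each `e ∈ J` has at least `p + k - B` available pool colours
  have hJsum : #J * (p + k - B) ≤ k * p :=
    calc #J * (p + k - B) = #J • (p + k - B) := (smul_eq_mul _ _).symm
      _ ≤ ∑ e ∈ J, #(pool \ forb e) := card_nsmul_le_sum _ _ _ fun e he => by
          have := card_add_card_le_card_sdiff_add_card_sdiff_add hdisj (forb e)
          have := hforb e (hJI he)
          have := hmax e he
          omega
      _ ≤ ∑ e ∈ I, #(pool \ forb e) := sum_le_sum_of_subset hJI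
      _ = ∑ c ∈ pool, #{e ∈ I | c ∉ forb e} := sum_card_sdiff_eq_sum_card_filter I pool forb
      _ ≤ #pool • k := sum_le_card_nsmul _ _ _ hfew
      _ = k * p := by rw [hpool, smul_eq_mul, mul_comm]
  refine le_trans ?_ (card_le_card (subset_biUnion_of_mem (fun e => reserve \ forb e) he₀))
  by_contra! hlt
  have : (B + 1) * (p + k - B) ≤ k * p := (Nat.mul_le_mul_right _ hlt).trans hJsum
  obtain ⟨r, rfl⟩ : ∃ r, p = B + r := ⟨p - B, by omega⟩
  rw [show B + r + k - B = r + k by omega] at this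
  nlinarith [Nat.mul_le_mul_right r hkB]

variable [DecidableEq ι]

lemma exists_injOn_reserve [Nonempty α] (hk : 0 < k) (hdisj : Disjoint pool reserve)
    (hpool : #pool = p) (hres : #reserve = p) {I : Finset ι} {forb : ι → Finset α}
    (hforb : ∀ e ∈ I, #(forb e) + k ≤ p) (hfew : ∀ c ∈ pool, #{e ∈ I | c ∉ forb e} ≤ k) :
    ∃ δ : ι → α, (∀ e ∈ I, δ e ∈ reserve \ forb e) ∧ Set.InjOn δ I := by
  have hhall (J : Finset I) : #J ≤ #(J.biUnion fun e => reserve \ forb e) := by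
    have := card_le_card_biUnion_reserve hk hdisj hpool hres hforb hfew
      (J := J.map (Function.Embedding.subtype _)) fun e he => by
        obtain ⟨e', -, rfl⟩ := mem_map.1 he
        exact e'.2
    rwa [card_map, map_eq_image, image_biUnion] at this
  obtain ⟨f, hf_inj, hf⟩ := (all_card_le_biUnion_card_iff_exists_injective _).1 hhall
  refine ⟨fun e => if h : e ∈ I then f ⟨e, h⟩ else Classical.arbitrary α, fun e he => ?_, ?_⟩
  · simpa [he] using hf ⟨e, he⟩
  · intro e he e' he' h
    rw [mem_coe] at he he'
    simp only [dif_pos he, dif_pos he'] at h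
    simpa using hf_inj h

lemma zeroOrOneMod_card_filter_piecewise {I T₀ : Finset ι} (hT₀I : T₀ ⊆ I)
    (hT₀ : #T₀ % k = 1) {c : α} {δ : ι → α} (hδc : ∀ e ∈ I \ T₀, δ e ≠ c)
    (hδ : ∀ c', ZeroOrOneMod k #{e ∈ I \ T₀ | δ e = c'}) (c' : α) :
    ZeroOrOneMod k #{e ∈ I | T₀.piecewise (fun _ => c) δ e = c'} := by
  rw [← sdiff_union_of_subset hT₀I, filter_piecewise_union sdiff_disjoint,
    card_union_of_disjoint (disjoint_filter_filter sdiff_disjoint)]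
  by_cases hc' : c = c'
  · subst hc'
    rw [filter_false_of_mem hδc, filter_true_of_mem fun _ _ => rfl, card_empty, zero_add]
    exact Or.inr hT₀
  · rw [filter_false_of_mem fun _ _ => hc', card_empty, add_zero]
    exact hδ c'

lemma exists_zeroOrOneMod_assignment_of_subset [Nonempty α] (hk : 2 ≤ k)
    (hdisj : Disjoint pool reserve) (hpool : #pool = p) (hres : #reserve = p)
    (forb : ι → Finset α) (I : Finset ι) (hforb : ∀ e ∈ I, #(forb e) + k ≤ p) {P : Finset α}
    (hP : P ⊆ pool) (hretired : ∀ c ∈ pool \ P, #{e ∈ I | c ∉ forb e} ≤ k) :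
    ∃ δ : ι → α, (∀ e ∈ I, δ e ∈ P ∪ reserve ∧ δ e ∉ forb e) ∧
      ∀ c, ZeroOrOneMod k #{e ∈ I | δ e = c} := by
  induction I using Finset.strongInduction generalizing P with
  | H I ih =>
  by_cases hbusy : ∃ c ∈ P, k < #{e ∈ I | c ∉ forb e}
  · obtain ⟨c, hcP, hc⟩ := hbusy
    set T := {e ∈ I | c ∉ forb e}
    obtain ⟨T₀, hT₀T, hT₀ne, hT₀, hTT₀⟩ :=
      exists_subset_card_mod_eq_one hk (T := T) (card_pos.1 (by omega))
    have hT₀I : T₀ ⊆ I := hT₀T.trans (filter_subset _ _)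
    have hretired' : ∀ c' ∈ pool \ P.erase c, #{e ∈ I \ T₀ | c' ∉ forb e} ≤ k := by
      intro c' hc'
      rw [mem_sdiff, mem_erase, not_and_or, not_not] at hc'
      obtain ⟨hc'pool, rfl | hc'P⟩ := hc'
      · have hsub : {e ∈ I \ T₀ | c' ∉ forb e} ⊆ T \ T₀ := fun e he => by
          rw [mem_filter, mem_sdiff] at he
          exact mem_sdiff.2 ⟨mem_filter.2 ⟨he.1.1, he.2⟩, he.1.2⟩
        have := card_le_card hsub
        rw [card_sdiff_of_subset hT₀T] at this
        omega
      · exact (card_le_card (filter_subset_filter _ sdiff_subset)).trans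
          (hretired c' (mem_sdiff.2 ⟨hc'pool, hc'P⟩))
    obtain ⟨δ, hδ, hδmod⟩ := ih (I \ T₀) (sdiff_ssubset hT₀I hT₀ne)
      (fun e he => hforb e (mem_sdiff.1 he).1) ((erase_subset c P).trans hP) hretired'
    have hδc : ∀ e ∈ I \ T₀, δ e ≠ c := fun e he hδe => by
      have := (hδ e he).1
      rw [hδe, mem_union, mem_erase] at this
      exact this.elim (fun h => h.1 rfl) (disjoint_left.1 hdisj (hP hcP))
    refine ⟨T₀.piecewise (fun _ => c) δ, fun e he => ?_,
      zeroOrOneMod_card_filter_piecewise hT₀I hT₀ hδc hδmod⟩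
    by_cases heT : e ∈ T₀
    · rw [piecewise_eq_of_mem _ _ _ heT]
      exact ⟨mem_union_left _ hcP, (mem_filter.1 (hT₀T heT)).2⟩
    · rw [piecewise_eq_of_notMem _ _ _ heT]
      obtain ⟨hδr, hδf⟩ := hδ e (mem_sdiff.2 ⟨he, heT⟩)
      exact ⟨union_subset_union (erase_subset c P) subset_rfl hδr, hδf⟩
  · push Not at hbusy
    have hfew : ∀ c ∈ pool, #{e ∈ I | c ∉ forb e} ≤ k := fun c hc => by
      by_cases hcP : c ∈ P
      · exact hbusy c hcP
      · exact hretired c (mem_sdiff.2 ⟨hc, hcP⟩)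
    obtain ⟨δ, hδ, hinj⟩ := exists_injOn_reserve (by omega) hdisj hpool hres hforb hfew
    refine ⟨δ, fun e he => ?_, fun c => zeroOrOneMod_of_le_one hk ?_⟩
    · obtain ⟨hδr, hδf⟩ := mem_sdiff.1 (hδ e he)
      exact ⟨mem_union_right _ hδr, hδf⟩
    · refine card_le_one.2 fun e he e' he' => ?_
      rw [mem_filter] at he he'
      exact hinj he.1 he'.1 (he.2.trans he'.2.symm)

theorem exists_zeroOrOneMod_assignment [Nonempty α] (hk : 2 ≤ k) (hdisj : Disjoint pool reserve)
    (hpool : #pool = p) (hres : #reserve = p) (forb : ι → Finset α) (I : Finset ι)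
    (hforb : ∀ e ∈ I, #(forb e) + k ≤ p) :
    ∃ δ : ι → α, (∀ e ∈ I, δ e ∈ pool ∪ reserve ∧ δ e ∉ forb e) ∧
      ∀ c, ZeroOrOneMod k #{e ∈ I | δ e = c} :=
  exists_zeroOrOneMod_assignment_of_subset hk hdisj hpool hres forb I hforb subset_rfl
    (by simp)

end Allocation

section EdgeDegree

variable {V : Type*} [DecidableEq V] {k : ℕ}

def edgeDeg (S : Finset (Sym2 V)) (v : V) : ℕ := #{e ∈ S | v ∈ e}

def DegreesOneMod (k : ℕ) (S : Finset (Sym2 V)) : Prop := ∀ v, ZeroOrOneMod k (edgeDeg S v)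

lemma edgeDeg_mono {S T : Finset (Sym2 V)} (h : S ⊆ T) (v : V) : edgeDeg S v ≤ edgeDeg T v :=
  card_le_card (filter_subset_filter _ h)

lemma edgeDeg_union {S T : Finset (Sym2 V)} (h : Disjoint S T) (v : V) :
    edgeDeg (S ∪ T) v = edgeDeg S v + edgeDeg T v := by
  rw [edgeDeg, filter_union, card_union_of_disjoint (disjoint_filter_filter h)]
  rfl

lemma edgeDeg_eq_card_of_forall_mem {S : Finset (Sym2 V)} {a : V} (hS : ∀ e ∈ S, a ∈ e) :
    edgeDeg S a = #S := by
  rw [edgeDeg, filter_true_of_mem hS]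

lemma edgeDeg_le_one_of_forall_mem {S : Finset (Sym2 V)} {a v : V} (hS : ∀ e ∈ S, a ∈ e)
    (hv : v ≠ a) : edgeDeg S v ≤ 1 :=
  card_le_one.2 fun e he f hf => by
    rw [mem_filter] at he hf
    rw [(Sym2.mem_and_mem_iff hv.symm).1 ⟨hS e he.1, he.2⟩,
      (Sym2.mem_and_mem_iff hv.symm).1 ⟨hS f hf.1, hf.2⟩]

lemma sum_edgeDeg_le (A : Finset V) (S : Finset (Sym2 V)) : ∑ v ∈ A, edgeDeg S v ≤ 2 * #S := by
  have hends : ∀ e : Sym2 V, #{v ∈ A | v ∈ e} ≤ 2 := fun e => by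
    induction e using Sym2.ind with
    | h x y =>
      refine (card_le_card (t := {x, y}) fun v hv => ?_).trans card_le_two
      rcases Sym2.mem_iff.1 (mem_filter.1 hv).2 with rfl | rfl <;> simp
  calc ∑ v ∈ A, edgeDeg S v = ∑ e ∈ S, #{v ∈ A | v ∈ e} :=
        sum_card_bipartiteAbove_eq_sum_card_bipartiteBelow (fun v e => v ∈ e)
    _ ≤ #S • 2 := sum_le_card_nsmul _ _ _ fun e _ => hends e
    _ = 2 * #S := by rw [smul_eq_mul, mul_comm]

lemma DegreesOneMod.union (hk : 2 ≤ k) {H D : Finset (Sym2 V)} (hH : DegreesOneMod k H)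
    (hdisj : Disjoint H D)
    (hD : ∀ v, edgeDeg D v = 0 ∨ (k ∣ edgeDeg D v ∧ edgeDeg H v ≠ 0) ∨
      (edgeDeg H v = 0 ∧ edgeDeg D v = 1)) :
    DegreesOneMod k (H ∪ D) := by
  intro v
  rw [ZeroOrOneMod, edgeDeg_union hdisj]
  rcases hD v with h | ⟨⟨m, hm⟩, h⟩ | ⟨h1, h2⟩
  · rw [h, add_zero]
    exact hH v
  · right
    rw [hm, Nat.add_mul_mod_self_left]
    exact (hH v).resolve_left h
  · right
    rw [h1, h2]
    exact Nat.mod_eq_of_lt hk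

def edgesMeeting (E : Finset (Sym2 V)) (T : Finset V) : Finset (Sym2 V) :=
  {e ∈ E | ∃ u ∈ T, u ∈ e}

lemma mem_edgesMeeting {E : Finset (Sym2 V)} {T : Finset V} {e : Sym2 V} :
    e ∈ edgesMeeting E T ↔ e ∈ E ∧ ∃ u ∈ T, u ∈ e :=
  mem_filter

lemma edgesMeeting_mono (E : Finset (Sym2 V)) {T T' : Finset V} (h : T' ⊆ T) :
    edgesMeeting E T' ⊆ edgesMeeting E T := fun e he => by
  obtain ⟨heE, u, huT, hu⟩ := mem_edgesMeeting.1 he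
  exact mem_edgesMeeting.2 ⟨heE, u, h huT, hu⟩

lemma card_filter_meets_le (C : Finset (Sym2 V)) (a x : V) :
    #{f ∈ C | ∃ u ∈ s(a, x).toFinset, u ∈ f} ≤ edgeDeg C a + edgeDeg C x := by
  refine (card_le_card fun f hf => ?_).trans (card_union_le _ _)
  obtain ⟨hfC, u, hu, huf⟩ := mem_filter.1 hf
  rcases Sym2.mem_iff.1 (Sym2.mem_toFinset.1 hu) with rfl | rfl
  · exact mem_union_left _ (mem_filter.2 ⟨hfC, huf⟩)
  · exact mem_union_right _ (mem_filter.2 ⟨hfC, huf⟩)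

lemma edgeDeg_add_one_le_of_mem_sdiff {S S' : Finset (Sym2 V)} (h : S' ⊆ S) {e : Sym2 V}
    (he : e ∈ S \ S') {x : V} (hx : x ∈ e) : edgeDeg S' x + 1 ≤ edgeDeg S x := by
  rw [edgeDeg, ← card_insert_of_notMem fun h' => (mem_sdiff.1 he).2 (mem_filter.1 h').1]
  exact card_le_card
    (insert_subset (mem_filter.2 ⟨(mem_sdiff.1 he).1, hx⟩) (filter_subset_filter _ h))

lemma exists_notMem_eq_mk_of_mem_sdiff {E : Finset (Sym2 V)} (hE : ∀ e ∈ E, ¬ e.IsDiag)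
    {T : Finset V} {a : V} {e : Sym2 V} (he : e ∈ edgesMeeting E T \ edgesMeeting E (T.erase a)) :
    ∃ x ∉ T, e = s(a, x) := by
  obtain ⟨he1, heC⟩ := mem_sdiff.1 he
  obtain ⟨heE, u, huT, hu⟩ := mem_edgesMeeting.1 he1
  have hnot : ∀ w ∈ e, w ∉ T.erase a := fun w hw hwT =>
    heC (mem_edgesMeeting.2 ⟨heE, w, hwT, hw⟩)
  obtain rfl : u = a := by
    by_contra h
    exact hnot u hu (mem_erase.2 ⟨h, huT⟩)
  obtain ⟨x, rfl⟩ := Sym2.mem_iff_exists.1 hu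
  have hxu : x ≠ u := fun h => hE _ heE (h ▸ Sym2.mk_isDiag_iff.2 rfl)
  exact ⟨x, fun hxT => hnot x (Sym2.mem_mk_right _ _) (mem_erase.2 ⟨hxu, hxT⟩), rfl⟩

lemma edgeDeg_edgesMeeting_erase_le {E : Finset (Sym2 V)} {T : Finset V} {a : V} (haT : a ∈ T) :
    edgeDeg (edgesMeeting E (T.erase a)) a ≤ edgeDeg (E ∩ T.sym2) a := by
  refine card_le_card fun e he => ?_
  obtain ⟨heC, hae⟩ := mem_filter.1 he
  obtain ⟨heE, u, huT, hu⟩ := mem_edgesMeeting.1 heC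
  obtain ⟨hua, huT⟩ := mem_erase.1 huT
  refine mem_filter.2 ⟨mem_inter.2 ⟨heE, mem_sym2_iff.2 fun w hw => ?_⟩, hae⟩
  rw [(Sym2.mem_and_mem_iff hua.symm).1 ⟨hae, hu⟩, Sym2.mem_iff] at hw
  rcases hw with rfl | rfl
  · exact haT
  · exact huT

lemma degreesOneMod_filter_ite {α : Type*} [DecidableEq α] {E H : Finset (Sym2 V)} (hHE : H ⊆ E)
    (hH : DegreesOneMod k H) {γ : Sym2 V → α} (hγ : ∀ c, DegreesOneMod k {e ∈ E \ H | γ e = c})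
    {c₀ : α} (hc₀ : ∀ e ∈ E \ H, γ e ≠ c₀) (c : α) :
    DegreesOneMod k {e ∈ E | (if e ∈ H then c₀ else γ e) = c} := by
  by_cases hc : c₀ = c
  · subst hc
    convert hH using 1
    ext e
    by_cases heH : e ∈ H
    · simp [heH, hHE heH]
    · simpa [heH] using fun heE => hc₀ e (mem_sdiff.2 ⟨heE, heH⟩)
  · convert hγ c using 1
    ext e
    by_cases heH : e ∈ H <;> simp [heH, hc]

end EdgeDegree

def AFKProperty (k : ℕ) : Prop :=
  ∀ (W : Type) [Fintype W] [DecidableEq W] (H : SimpleGraph W) [DecidableRel H.Adj],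
    (k - 1) * Fintype.card W + 1 ≤ H.edgeFinset.card →
    ∃ H' : SimpleGraph W, H' ≤ H ∧ H'.edgeSet.Nonempty ∧ ∀ v : W, k ∣ Nat.card (H'.neighborSet v)

section AFK

variable {V : Type} [DecidableEq V] {k : ℕ}

theorem AFKProperty.exists_subset_dvd_edgeDeg (hAFK : AFKProperty k) {A : Finset V}
    {S : Finset (Sym2 V)} (hdiag : ∀ e ∈ S, ¬ e.IsDiag) (hSA : S ⊆ A.sym2)
    (hcard : (k - 1) * #A < #S) :
    ∃ D ⊆ S, D.Nonempty ∧ ∀ v, k ∣ edgeDeg D v := by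
  classical
  let φ : Sym2 A ↪ Sym2 V := ⟨Sym2.map Subtype.val, Sym2.map.injective Subtype.val_injective⟩
  let HA : SimpleGraph A := SimpleGraph.fromEdgeSet {e | φ e ∈ S}
  have hHA : HA.edgeFinset.map φ = S := by
    ext e
    simp only [mem_map, SimpleGraph.mem_edgeFinset, HA, SimpleGraph.edgeSet_fromEdgeSet]
    constructor
    · rintro ⟨a, ⟨ha, -⟩, rfl⟩
      exact ha
    · intro he
      induction e using Sym2.ind with
      | h x y =>
        have hx := mem_sym2_iff.1 (hSA he) x (Sym2.mem_mk_left x y)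
        have hy := mem_sym2_iff.1 (hSA he) y (Sym2.mem_mk_right x y)
        refine ⟨s(⟨x, hx⟩, ⟨y, hy⟩), ⟨he, fun hd => hdiag _ he ?_⟩, rfl⟩
        simpa using hd
  have hHAcard : #HA.edgeFinset = #S := (card_map φ).symm.trans (congrArg card hHA)
  obtain ⟨H', hH'A, hH'ne, hH'dvd⟩ := hAFK A HA (by
    rw [Fintype.card_coe]
    exact hcard.trans_eq (hHAcard.symm.trans (by congr!)))
  refine ⟨H'.edgeFinset.map φ, hHA ▸ map_subset_map.2 (SimpleGraph.edgeFinset_mono hH'A),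
    hH'ne.elim fun e he => ⟨φ e, mem_map_of_mem _ (SimpleGraph.mem_edgeFinset.2 he)⟩,
    fun v => ?_⟩
  have hdeg : edgeDeg (H'.edgeFinset.map φ) v = #{e ∈ H'.edgeFinset | v ∈ φ e} := by
    rw [edgeDeg, filter_map, card_map]
    rfl
  rw [hdeg]
  by_cases hv : v ∈ A
  · have : {e ∈ H'.edgeFinset | v ∈ φ e} = H'.incidenceFinset ⟨v, hv⟩ := by
      rw [SimpleGraph.incidenceFinset_eq_filter]
      refine filter_congr fun e _ => ?_
      simp only [φ, Function.Embedding.coeFn_mk, Sym2.mem_map, Subtype.exists, exists_and_right,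
        exists_eq_right]
      exact ⟨fun ⟨_, h⟩ => h, fun h => ⟨hv, h⟩⟩
    rw [this, SimpleGraph.card_incidenceFinset_eq_degree,
      ← SimpleGraph.card_neighborSet_eq_degree, ← Nat.card_eq_fintype_card]
    exact hH'dvd _
  · have : {e ∈ H'.edgeFinset | v ∈ φ e} = ∅ := filter_eq_empty_iff.2 fun e _ hve => by
      obtain ⟨a, -, rfl⟩ := Sym2.mem_map.1 hve
      exact hv a.2
    rw [this, card_empty]
    exact dvd_zero k

end AFK

section Maximal

variable {V : Type} [Fintype V] [DecidableEq V] {k : ℕ} {G : SimpleGraph V} [DecidableRel G.Adj]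
  {H : Finset (Sym2 V)}

theorem exists_maximal_degreesOneMod (k : ℕ) (G : SimpleGraph V) [DecidableRel G.Adj] :
    ∃ H, Maximal (fun S => S ⊆ G.edgeFinset ∧ DegreesOneMod k S) H :=
  Set.Finite.exists_maximal (G.edgeFinset.powerset.finite_toSet.subset fun S hS =>
    mem_powerset.2 hS.1) ⟨∅, empty_subset _, fun v => Or.inl (by simp [edgeDeg])⟩

-- each of the three cases keeps the degree of `v` in `H ∪ D` equal to `0` or `1 (mod k)`
lemma not_forall_compatible_of_maximal (hk : 2 ≤ k)
    (hH : Maximal (fun S => S ⊆ G.edgeFinset ∧ DegreesOneMod k S) H) {D : Finset (Sym2 V)}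
    (hD : D ⊆ G.edgeFinset \ H) (hDne : D.Nonempty) :
    ¬ ∀ v, edgeDeg D v = 0 ∨ (k ∣ edgeDeg D v ∧ edgeDeg H v ≠ 0) ∨
      (edgeDeg H v = 0 ∧ edgeDeg D v = 1) := fun hcompat => by
  have hdisj : Disjoint H D := disjoint_sdiff.mono_right hD
  have hHD := hH.2 ⟨union_subset hH.1.1 (hD.trans sdiff_subset), hH.1.2.union hk hdisj hcompat⟩
    subset_union_left
  obtain ⟨e, he⟩ := hDne
  exact (mem_sdiff.1 (hD he)).2 (hHD (mem_union_right H he))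

theorem inter_sym2_eq_empty_of_maximal (hk : 2 ≤ k)
    (hH : Maximal (fun S => S ⊆ G.edgeFinset ∧ DegreesOneMod k S) H) {T : Finset V}
    (hT : ∀ x ∈ T, edgeDeg H x = 0) : (G.edgeFinset \ H) ∩ T.sym2 = ∅ := by
  refine eq_empty_of_forall_notMem fun e he => ?_
  obtain ⟨heE, heT⟩ := mem_inter.1 he
  refine not_forall_compatible_of_maximal hk hH (singleton_subset_iff.2 heE)
    (singleton_nonempty e) fun v => ?_
  by_cases hv : v ∈ e
  · refine Or.inr (Or.inr ⟨hT v (mem_sym2_iff.1 heT v hv), ?_⟩)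
    rw [edgeDeg, filter_singleton, if_pos hv, card_singleton]
  · exact Or.inl (by rw [edgeDeg, filter_singleton, if_neg hv, card_empty])

theorem card_edges_to_isolated_lt_of_maximal (hk : 2 ≤ k)
    (hH : Maximal (fun S => S ⊆ G.edgeFinset ∧ DegreesOneMod k S) H) {a : V}
    (ha : edgeDeg H a ≠ 0) :
    #{e ∈ G.edgeFinset \ H | a ∈ e ∧ ∃ u ∈ e, edgeDeg H u = 0} < k := by
  by_contra! hle
  obtain ⟨D, hDsub, hDcard⟩ := exists_subset_card_eq hle
  have hD : ∀ e ∈ D, e ∈ G.edgeFinset \ H ∧ a ∈ e ∧ ∃ u ∈ e, edgeDeg H u = 0 := fun e he =>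
    mem_filter.1 (hDsub he)
  refine not_forall_compatible_of_maximal hk hH (fun e he => (hD e he).1)
    (card_pos.1 (by omega)) fun v => ?_
  by_cases hva : v = a
  · subst hva
    rw [edgeDeg_eq_card_of_forall_mem fun e he => (hD e he).2.1, hDcard]
    exact Or.inr (Or.inl ⟨dvd_rfl, ha⟩)
  by_cases h0 : edgeDeg D v = 0
  · exact Or.inl h0
  -- an edge of `D` at `v` is `s(a, v)`, so `v` is its isolated end
  obtain ⟨e, he⟩ := card_ne_zero.1 h0
  obtain ⟨heD, hve⟩ := mem_filter.1 he
  obtain ⟨-, hae, u, hue, hu⟩ := hD e heD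
  have hua : u ≠ a := fun h => ha (h ▸ hu)
  have huv : v = u := by
    rw [(Sym2.mem_and_mem_iff hua.symm).1 ⟨hae, hue⟩, Sym2.mem_iff] at hve
    exact hve.resolve_left hva
  refine Or.inr (Or.inr ⟨huv ▸ hu, ?_⟩)
  have := edgeDeg_le_one_of_forall_mem (fun e he => (hD e he).2.1) hva
  omega

theorem card_inter_sym2_le_of_maximal (hk : 2 ≤ k)
    (hH : Maximal (fun S => S ⊆ G.edgeFinset ∧ DegreesOneMod k S) H) (hAFK : AFKProperty k)
    {A : Finset V} (hA : ∀ x ∈ A, edgeDeg H x ≠ 0) :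
    #((G.edgeFinset \ H) ∩ A.sym2) ≤ (k - 1) * #A := by
  by_contra! hlt
  obtain ⟨D, hDS, hDne, hDdvd⟩ := hAFK.exists_subset_dvd_edgeDeg
    (fun e he => G.not_isDiag_of_mem_edgeSet
      (SimpleGraph.mem_edgeFinset.1 (mem_sdiff.1 (mem_inter.1 he).1).1)) inter_subset_right hlt
  refine not_forall_compatible_of_maximal hk hH (hDS.trans inter_subset_left) hDne fun v => ?_
  by_cases hv : v ∈ A
  · exact Or.inr (Or.inl ⟨hDdvd v, hA v hv⟩)
  · refine Or.inl (card_eq_zero.2 (filter_eq_empty_iff.2 fun e he hve => hv ?_))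
    exact mem_sym2_iff.1 (mem_inter.1 (hDS he)).2 v hve

theorem exists_edgeDeg_inter_sym2_le_of_maximal (hk : 2 ≤ k)
    (hH : Maximal (fun S => S ⊆ G.edgeFinset ∧ DegreesOneMod k S) H) (hAFK : AFKProperty k)
    {T : Finset V} (hT : T.Nonempty) :
    ∃ a ∈ T, edgeDeg ((G.edgeFinset \ H) ∩ T.sym2) a ≤ 3 * (k - 1) := by
  set E := G.edgeFinset \ H
  set A := {x ∈ T | edgeDeg H x ≠ 0}
  rcases A.eq_empty_or_nonempty with hA | hA
  · obtain ⟨a, ha⟩ := hT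
    refine ⟨a, ha, ?_⟩
    rw [inter_sym2_eq_empty_of_maximal hk hH fun x hx => ?_]
    · simp [edgeDeg]
    · by_contra h
      exact (eq_empty_iff_forall_notMem.1 hA) x (mem_filter.2 ⟨hx, h⟩)
  have hAT : A ⊆ T := filter_subset _ _
  set EA := E ∩ A.sym2
  have hEA : EA ⊆ E ∩ T.sym2 := inter_subset_inter_left (sym2_mono hAT)
  -- the other edges inside `T` at a vertex of `A` go to `H`-isolated vertices
  have hrest : ∀ a ∈ A, edgeDeg ((E ∩ T.sym2) \ EA) a ≤ k - 1 := by
    intro a ha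
    refine (card_le_card fun e he => ?_).trans
      (Nat.le_sub_one_of_lt (card_edges_to_isolated_lt_of_maximal hk hH (mem_filter.1 ha).2))
    obtain ⟨heET, heA⟩ := mem_sdiff.1 (mem_filter.1 he).1
    obtain ⟨heE, heT⟩ := mem_inter.1 heET
    refine mem_filter.2 ⟨heE, (mem_filter.1 he).2, ?_⟩
    obtain ⟨u, hu, huA⟩ : ∃ u ∈ e, u ∉ A := by
      by_contra! h
      exact heA (mem_inter.2 ⟨heE, mem_sym2_iff.2 h⟩)
    refine ⟨u, hu, ?_⟩
    by_contra h
    exact huA (mem_filter.2 ⟨mem_sym2_iff.1 heT u hu, h⟩)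
  have hsum : ∑ a ∈ A, edgeDeg (E ∩ T.sym2) a ≤ ∑ a ∈ A, 3 * (k - 1) := by
    calc ∑ a ∈ A, edgeDeg (E ∩ T.sym2) a
        = ∑ a ∈ A, edgeDeg EA a + ∑ a ∈ A, edgeDeg ((E ∩ T.sym2) \ EA) a := by
          rw [← sum_add_distrib]
          refine sum_congr rfl fun a _ => ?_
          rw [← edgeDeg_union disjoint_sdiff, union_sdiff_of_subset hEA]
      _ ≤ 2 * ((k - 1) * #A) + #A * (k - 1) := add_le_add
          ((sum_edgeDeg_le A EA).trans (Nat.mul_le_mul_left 2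
            (card_inter_sym2_le_of_maximal hk hH hAFK fun x hx => (mem_filter.1 hx).2)))
          ((sum_le_card_nsmul _ _ _ hrest).trans_eq (smul_eq_mul _ _))
      _ = ∑ a ∈ A, 3 * (k - 1) := by rw [sum_const, smul_eq_mul]; ring
  obtain ⟨a, ha, hle⟩ := exists_le_of_sum_le hA hsum
  exact ⟨a, hAT ha, hle⟩

end Maximal

section Coloring

variable {V α : Type*} [DecidableEq V] [DecidableEq α] [Nonempty α] {k p d : ℕ}
  {pool reserve : Finset α}

theorem exists_extend_coloring (hk : 2 ≤ k) (hdisj : Disjoint pool reserve) (hpool : #pool = p)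
    (hres : #reserve = p) {C I : Finset (Sym2 V)} (hCI : Disjoint C I) (γ : Sym2 V → α) {a : V}
    (haI : ∀ e ∈ I, a ∈ e) (hforb : ∀ e ∈ I, #{f ∈ C | ∃ u ∈ e.toFinset, u ∈ f} + k ≤ p)
    (ha : ∀ c, edgeDeg {f ∈ C | γ f = c} a ≤ 1) :
    ∃ δ : Sym2 V → α, (∀ e ∈ I, δ e ∈ pool ∪ reserve) ∧
      (∀ c, ZeroOrOneMod k (edgeDeg {f ∈ C ∪ I | I.piecewise δ γ f = c} a)) ∧
      ∀ v c, edgeDeg {f ∈ C ∪ I | I.piecewise δ γ f = c} v = edgeDeg {f ∈ C | γ f = c} v ∨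
        edgeDeg {f ∈ C ∪ I | I.piecewise δ γ f = c} v ≤ edgeDeg I v := by
  obtain ⟨δ, hδ, hδmod⟩ := exists_zeroOrOneMod_assignment hk hdisj hpool hres
    (fun e : Sym2 V => ({f ∈ C | ∃ u ∈ e.toFinset, u ∈ f}).image γ) I
    fun e he => by
      have := card_image_le (s := {f ∈ C | ∃ u ∈ e.toFinset, u ∈ f}) (f := γ)
      have := hforb e he
      omega
  have hsplit : ∀ v c, edgeDeg {f ∈ C ∪ I | I.piecewise δ γ f = c} v =
      edgeDeg {f ∈ C | γ f = c} v + edgeDeg {f ∈ I | δ f = c} v := fun v c => by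
    rw [filter_piecewise_union hCI, edgeDeg_union (disjoint_filter_filter hCI)]
  -- `δ e` avoids the colours of the old edges meeting `e`
  have hfresh : ∀ v c, edgeDeg {f ∈ I | δ f = c} v ≠ 0 → edgeDeg {f ∈ C | γ f = c} v = 0 := by
    intro v c hnew
    obtain ⟨e, he⟩ := card_ne_zero.1 hnew
    rw [mem_filter, mem_filter] at he
    obtain ⟨⟨heI, rfl⟩, hve⟩ := he
    refine card_eq_zero.2 (filter_eq_empty_iff.2 fun f hf hvf => ?_)
    rw [mem_filter] at hf
    exact (hδ e heI).2 (mem_image.2 ⟨f, mem_filter.2 ⟨hf.1, v, Sym2.mem_toFinset.2 hve, hvf⟩, hf.2⟩)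
  refine ⟨δ, fun e he => (hδ e he).1, fun c => ?_, fun v c => ?_⟩
  · rw [hsplit]
    by_cases hnew : edgeDeg {f ∈ I | δ f = c} a = 0
    · rw [hnew, add_zero]
      exact zeroOrOneMod_of_le_one hk (ha c)
    · rw [hfresh a c hnew, zero_add,
        edgeDeg_eq_card_of_forall_mem fun e he => haI e (mem_filter.1 he).1]
      exact hδmod c
  · rw [hsplit]
    by_cases hnew : edgeDeg {f ∈ I | δ f = c} v = 0
    · exact Or.inl (by rw [hnew, add_zero])
    · rw [hfresh v c hnew, zero_add]
      exact Or.inr (edgeDeg_mono (filter_subset _ _) v)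

-- `T` is the set of processed vertices, and `edgesMeeting E T` the set of edges coloured so far
theorem exists_coloring_edgesMeeting (hk : 2 ≤ k) (hdisj : Disjoint pool reserve)
    (hpool : #pool = p) (hres : #reserve = p) (hp : 2 * d + k ≤ p + 1) {E : Finset (Sym2 V)}
    (hE : ∀ e ∈ E, ¬ e.IsDiag)
    (hdegen : ∀ T : Finset V, T.Nonempty → ∃ a ∈ T, edgeDeg (E ∩ T.sym2) a ≤ d)
    (T : Finset V) (hout : ∀ x ∉ T, edgeDeg (edgesMeeting E T) x ≤ d) :
    ∃ γ : Sym2 V → α, (∀ e ∈ edgesMeeting E T, γ e ∈ pool ∪ reserve) ∧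
      (∀ c, ∀ v ∈ T, ZeroOrOneMod k (edgeDeg {e ∈ edgesMeeting E T | γ e = c} v)) ∧
      ∀ c, ∀ v ∉ T, edgeDeg {e ∈ edgesMeeting E T | γ e = c} v ≤ 1 := by
  induction T using Finset.strongInduction with
  | H T ih =>
  rcases T.eq_empty_or_nonempty with rfl | hT
  · have hempty : edgesMeeting E ∅ = ∅ := by simp [edgesMeeting]
    refine ⟨fun _ => Classical.arbitrary α, ?_, ?_, ?_⟩ <;> simp [hempty, edgeDeg]
  obtain ⟨a, haT, hadeg⟩ := hdegen T hT
  set C := edgesMeeting E (T.erase a)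
  set I := edgesMeeting E T \ C
  have hCT : C ⊆ edgesMeeting E T := edgesMeeting_mono E (erase_subset a T)
  have hI : ∀ e ∈ I, ∃ x ∉ T, e = s(a, x) := fun e he => exists_notMem_eq_mk_of_mem_sdiff hE he
  have haI : ∀ e ∈ I, a ∈ e := fun e he => by
    obtain ⟨x, -, rfl⟩ := hI e he
    exact Sym2.mem_mk_left a x
  have hCa : edgeDeg C a ≤ d := (edgeDeg_edgesMeeting_erase_le haT).trans hadeg
  obtain ⟨γ, hγpal, hγin, hγout⟩ := ih (T.erase a) (erase_ssubset haT) fun x hx => by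
    by_cases hxa : x = a
    · rw [hxa]
      exact hCa
    · exact (edgeDeg_mono hCT x).trans (hout x fun hxT => hx (mem_erase.2 ⟨hxa, hxT⟩))
  have hforb : ∀ e ∈ I, #{f ∈ C | ∃ u ∈ e.toFinset, u ∈ f} + k ≤ p := by
    intro e he
    obtain ⟨x, hxT, rfl⟩ := hI e he
    -- `hout x` also counts the edge `s(a, x)`, which is not in `C`
    have := edgeDeg_add_one_le_of_mem_sdiff hCT he (Sym2.mem_mk_right a x)
    have := hout x hxT
    have := card_filter_meets_le C a x
    omega
  obtain ⟨δ, hδpal, hδa, hδ⟩ := exists_extend_coloring hk hdisj hpool hres disjoint_sdiff γ haI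
    hforb fun c => hγout c a (notMem_erase a T)
  have hCI : C ∪ I = edgesMeeting E T := union_sdiff_of_subset hCT
  refine ⟨I.piecewise δ γ, fun e he => ?_, fun c v hv => ?_, fun c v hv => ?_⟩
  · by_cases heI : e ∈ I
    · rw [piecewise_eq_of_mem _ _ _ heI]
      exact hδpal e heI
    · rw [piecewise_eq_of_notMem _ _ _ heI]
      rw [← hCI] at he
      exact hγpal e ((mem_union.1 he).resolve_right heI)
  · rw [← hCI]
    by_cases hva : v = a
    · exact hva ▸ hδa c
    have hIv : edgeDeg I v = 0 := card_eq_zero.2 (filter_eq_empty_iff.2 fun e he hve => by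
      obtain ⟨x, hxT, rfl⟩ := hI e he
      rcases Sym2.mem_iff.1 hve with rfl | rfl
      · exact hva rfl
      · exact hxT hv)
    rcases hδ v c with h | h
    · rw [h]
      exact hγin c v (mem_erase.2 ⟨hva, hv⟩)
    · exact Or.inl (Nat.le_zero.1 (hIv ▸ h))
  · rw [← hCI]
    have hva : v ≠ a := fun h => hv (h ▸ haT)
    rcases hδ v c with h | h
    · rw [h]
      exact hγout c v fun h' => hv (mem_of_mem_erase h')
    · exact h.trans (edgeDeg_le_one_of_forall_mem haI hva)

theorem exists_coloring_of_degenerate [Fintype V] (hk : 2 ≤ k) (hdisj : Disjoint pool reserve)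
    (hpool : #pool = p) (hres : #reserve = p) (hp : 2 * d + k ≤ p + 1) {E : Finset (Sym2 V)}
    (hE : ∀ e ∈ E, ¬ e.IsDiag)
    (hdegen : ∀ T : Finset V, T.Nonempty → ∃ a ∈ T, edgeDeg (E ∩ T.sym2) a ≤ d) :
    ∃ γ : Sym2 V → α, (∀ e ∈ E, γ e ∈ pool ∪ reserve) ∧ ∀ c, DegreesOneMod k {e ∈ E | γ e = c} := by
  have hE_univ : edgesMeeting E univ = E :=
    filter_true_of_mem fun e _ => ⟨e.out.1, mem_univ _, Sym2.out_fst_mem e⟩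
  obtain ⟨γ, hpal, hmod, -⟩ := exists_coloring_edgesMeeting hk hdisj hpool hres hp hE hdegen univ
    (by simp)
  rw [hE_univ] at hpal hmod
  exact ⟨γ, hpal, fun c v => hmod c v (mem_univ v)⟩

end Coloring

theorem exists_isChiPrimeKColoring_of_nat {V : Type*} [Fintype V] [DecidableEq V] {k m : ℕ}
    (hm : 0 < m) (G : SimpleGraph V)
    [DecidableRel G.Adj] (f : Sym2 V → ℕ) (hf : ∀ e ∈ G.edgeFinset, f e < m)
    (hmod : ∀ c, DegreesOneMod k {e ∈ G.edgeFinset | f e = c}) :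
    ∃ c : Sym2 V → Fin m, IsChiPrimeKColoring G k c := by
  refine ⟨fun e => ⟨f e % m, Nat.mod_lt _ hm⟩, fun i v => ?_⟩
  have : colorDeg G (fun e => ⟨f e % m, Nat.mod_lt _ hm⟩) i v =
      edgeDeg {e ∈ G.edgeFinset | f e = i} v := by
    rw [colorDeg, edgeDeg, G.incidenceFinset_eq_filter, filter_filter, filter_filter]
    refine congrArg card (filter_congr fun e he => ?_)
    rw [Fin.ext_iff, Fin.val_mk, Nat.mod_eq_of_lt (hf e he), and_comm]
  rw [this]
  exact hmod i v

end ChiPrimeK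

open ChiPrimeK Finset in
theorem chi_prime_k_of_AFK (k : ℕ) (hk : 2 ≤ k)
    (hAFK : ∀ (W : Type) [Fintype W] [DecidableEq W] (H : SimpleGraph W)
      [DecidableRel H.Adj],
      (k - 1) * Fintype.card W + 1 ≤ H.edgeFinset.card →
      ∃ H' : SimpleGraph W, H' ≤ H ∧ H'.edgeSet.Nonempty ∧
        ∀ v : W, k ∣ Nat.card (H'.neighborSet v))
    {V : Type} [Fintype V] [DecidableEq V] (G : SimpleGraph V) [DecidableRel G.Adj] :
    ∃ c : Sym2 V → Fin (14 * k - 9), IsChiPrimeKColoring G k c := by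
  obtain ⟨H, hH⟩ := exists_maximal_degreesOneMod k G
  have hdiag : ∀ e ∈ G.edgeFinset \ H, ¬ e.IsDiag := fun e he =>
    G.not_isDiag_of_mem_edgeSet (SimpleGraph.mem_edgeFinset.1 (mem_sdiff.1 he).1)
  set p := 7 * (k - 1)
  obtain ⟨γ, hγ, hγmod⟩ := exists_coloring_of_degenerate (pool := range p)
    (reserve := Ico p (2 * p)) (d := 3 * (k - 1)) hk
    (by rw [range_eq_Ico]; exact Ico_disjoint_Ico_consecutive 0 p (2 * p)) (card_range p)
    (by rw [Nat.card_Ico]; omega) (by omega) hdiag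
    fun T hT => exists_edgeDeg_inter_sym2_le_of_maximal hk hH hAFK hT
  have hγlt : ∀ e ∈ G.edgeFinset \ H, γ e < 2 * p := fun e he => by
    have := hγ e he
    simp only [mem_union, mem_range, mem_Ico] at this
    omega
  refine exists_isChiPrimeKColoring_of_nat (by omega) G
    (fun e => if e ∈ H then 2 * p else γ e) (fun e he => ?_)
    (degreesOneMod_filter_ite hH.1.1 hH.1.2 hγmod fun e he => (hγlt e he).ne)
  by_cases heH : e ∈ H
  · simp only [if_pos heH]
    omega
  · simp only [if_neg heH]
    have := hγlt e (mem_sdiff.2 ⟨he, heH⟩)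
    omega
end
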